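/- arXiv:2210.07943 — 11 statements merged into one kernel-verified Lean document; each statement's English description precedes it below -/
import Mathlib

section
/- For the Leslie–Gower competition map with positive parameters, suppose X ∈ (0, K₁), Y > 0, and h(X) < k(X). Then the next-iterate operator L_h(X, h(X)) = G(X, h(X)) − h(F(X, h(X))) is strictly positive. -/
/- The point `(X, h X)` lies on the `X`-nullcline, so `F` fixes its first coordinate and
`L_h(X, h X) = G(X, h X) - h X`. Below the `Y`-nullcline the second species grows, i.e.
`Y < k X` gives `G(X, Y) > Y`; applied to `Y = h X > 0` this is the claim. -/

noncomputable def F (r₁ K₁ α₁ X Y : ℝ) : ℝ := (1 + r₁) * X / (1 + r₁ / K₁ * X + α₁ * Y)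
noncomputable def G (r₂ K₂ α₂ X Y : ℝ) : ℝ := (1 + r₂) * Y / (1 + r₂ / K₂ * Y + α₂ * X)
noncomputable def h (r₁ K₁ α₁ X : ℝ) : ℝ := r₁ / (α₁ * K₁) * (K₁ - X)
noncomputable def k (r₂ K₂ α₂ X : ℝ) : ℝ := K₂ / r₂ * (r₂ - α₂ * X)

theorem F_h_eq_self {r₁ K₁ α₁ : ℝ} (hr₁ : 1 + r₁ ≠ 0) (hK₁ : K₁ ≠ 0) (hα₁ : α₁ ≠ 0) (X : ℝ) :
    F r₁ K₁ α₁ X (h r₁ K₁ α₁ X) = X := by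
  have hden : 1 + r₁ / K₁ * X + α₁ * h r₁ K₁ α₁ X = 1 + r₁ := by
    unfold h
    field_simp
    ring
  rw [F, hden, mul_div_cancel_left₀ X hr₁]

theorem h_pos {r₁ K₁ α₁ X : ℝ} (hr₁ : 0 < r₁) (hK₁ : 0 < K₁) (hα₁ : 0 < α₁) (hX : X < K₁) :
    0 < h r₁ K₁ α₁ X :=
  mul_pos (by positivity) (sub_pos.mpr hX)

theorem lt_G_of_lt_k {r₂ K₂ α₂ X Y : ℝ} (hr₂ : 0 < r₂) (hK₂ : 0 < K₂) (hα₂ : 0 ≤ α₂)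
    (hX : 0 ≤ X) (hY : 0 < Y) (hYk : Y < k r₂ K₂ α₂ X) :
    Y < G r₂ K₂ α₂ X Y := by
  have hden : 0 < 1 + r₂ / K₂ * Y + α₂ * X := by positivity
  have hgrowth : r₂ / K₂ * Y + α₂ * X < r₂ := by
    have hk : r₂ / K₂ * k r₂ K₂ α₂ X = r₂ - α₂ * X := by
      unfold k
      field_simp
    linarith [mul_lt_mul_of_pos_left hYk (div_pos hr₂ hK₂)]
  rw [G, lt_div_iff₀ hden]
  nlinarith

theorem stmt5_general (r₁ r₂ K₁ K₂ α₁ α₂ : ℝ)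
    (hr₁ : 0 < r₁) (hr₂ : 0 < r₂) (hK₁ : 0 < K₁) (hK₂ : 0 < K₂)
    (hα₁ : 0 < α₁) (hα₂ : 0 < α₂)
    (X : ℝ) (hX : X ∈ Set.Ioo 0 K₁)
    (hhk : h r₁ K₁ α₁ X < k r₂ K₂ α₂ X) :
    0 < G r₂ K₂ α₂ X (h r₁ K₁ α₁ X) -
        h r₁ K₁ α₁ (F r₁ K₁ α₁ X (h r₁ K₁ α₁ X)) := by
  rw [F_h_eq_self (by linarith) hK₁.ne' hα₁.ne', sub_pos]
  exact lt_G_of_lt_k hr₂ hK₂ hα₂.le hX.1.le (h_pos hr₁ hK₁ hα₁ hX.2) hhk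

theorem stmt5 (r₁ r₂ K₁ K₂ α₁ α₂ : ℝ)
    (hr₁ : 0 < r₁) (hr₂ : 0 < r₂) (hK₁ : 0 < K₁) (hK₂ : 0 < K₂)
    (hα₁ : 0 < α₁) (hα₂ : 0 < α₂)
    (X Y : ℝ) (hX : X ∈ Set.Ioo 0 K₁) (hY : 0 < Y)
    (hhk : h r₁ K₁ α₁ X < k r₂ K₂ α₂ X) :
    0 < G r₂ K₂ α₂ X (h r₁ K₁ α₁ X) -
        h r₁ K₁ α₁ (F r₁ K₁ α₁ X (h r₁ K₁ α₁ X)) :=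
  stmt5_general r₁ r₂ K₁ K₂ α₁ α₂ hr₁ hr₂ hK₁ hK₂ hα₁ hα₂ X hX hhk
end

section
/- For the Leslie–Gower competition map with positive parameters, suppose X ∈ (0, r₂/α₂) and h(X) < k(X). Then L_k(X, k(X)) = G(X, k(X)) − k(F(X, k(X))) is strictly negative. -/
/-! Along the nullcline `Y = k X` the map fixes `Y`, while `h X < Y` makes the denominator of `F`
exceed `1 + r₁`, so `F` moves `X` to the left; since `k` is decreasing, `k (F X Y) > k X = G X Y`. -/

theorem G_k_eq_k {r₂ K₂ α₂ : ℝ} (hr₂ : 0 < r₂) (hK₂ : K₂ ≠ 0) (X : ℝ) :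
    G r₂ K₂ α₂ X (k r₂ K₂ α₂ X) = k r₂ K₂ α₂ X := by
  have hden : 1 + r₂ / K₂ * k r₂ K₂ α₂ X + α₂ * X = 1 + r₂ := by
    unfold k
    field_simp
    ring
  rw [G, hden, mul_div_cancel_left₀ _ (by positivity)]

theorem k_strictAnti {r₂ K₂ α₂ : ℝ} (hr₂ : 0 < r₂) (hK₂ : 0 < K₂) (hα₂ : 0 < α₂) :
    StrictAnti (k r₂ K₂ α₂) := by
  intro X X' hXX'
  have hslope : 0 < K₂ / r₂ := div_pos hK₂ hr₂
  unfold k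
  gcongr

theorem F_lt_self_of_h_lt {r₁ K₁ α₁ X Y : ℝ} (hr₁ : 0 < r₁) (hK₁ : K₁ ≠ 0) (hα₁ : 0 < α₁)
    (hX : 0 < X) (hhY : h r₁ K₁ α₁ X < Y) :
    F r₁ K₁ α₁ X Y < X := by
  have hαh : α₁ * h r₁ K₁ α₁ X = r₁ - r₁ / K₁ * X := by
    unfold h
    field_simp
  have hden : 1 + r₁ < 1 + r₁ / K₁ * X + α₁ * Y := by
    linarith [mul_lt_mul_of_pos_left hhY hα₁]
  rw [F, div_lt_iff₀ (by linarith)]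
  linarith [mul_lt_mul_of_pos_left hden hX]

theorem stmt6 (r₁ r₂ K₁ K₂ α₁ α₂ : ℝ)
    (hr₁ : 0 < r₁) (hr₂ : 0 < r₂) (hK₁ : 0 < K₁) (hK₂ : 0 < K₂)
    (hα₁ : 0 < α₁) (hα₂ : 0 < α₂)
    (X : ℝ) (hX : X ∈ Set.Ioo 0 (r₂ / α₂))
    (hhk : h r₁ K₁ α₁ X < k r₂ K₂ α₂ X) :
    G r₂ K₂ α₂ X (k r₂ K₂ α₂ X) -
      k r₂ K₂ α₂ (F r₁ K₁ α₁ X (k r₂ K₂ α₂ X)) < 0 := by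
  rw [G_k_eq_k hr₂ hK₂.ne', sub_neg]
  exact k_strictAnti hr₂ hK₂ hα₂ (F_lt_self_of_h_lt hr₁ hK₁.ne' hα₁ hX.1 hhk)
end

section
/- For the Leslie–Gower competition map with positive parameters, if r₁/α₁ < K₂ and r₂/α₂ > K₁ (i.e., C₁₂ < 0 < C₂₁), then the region R₂ = {(X,Y) : X > 0, Y > 0, h(X) ≤ Y ≤ k(X)} is positively invariant: if (X,Y) ∈ R₂ then (F(X,Y), G(X,Y)) ∈ R₂. -/
/-! Each coordinate of the Leslie–Gower map is a Beverton–Holt map `x ↦ (1 + r) x / D`,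
`D = 1 + r x / K + c`, in its own variable, the competitor entering only through `c`
(`F r₁ K₁ α₁ X Y = bevertonHolt r₁ K₁ (α₁ * Y) X`, `G r₂ K₂ α₂ X Y = bevertonHolt r₂ K₂ (α₂ * X) Y`),
and the isoclines `Y = h X`, `Y = k X` are the zero sets of the growth rate `r - r x / K - c`.
A Beverton–Holt map multiplies the growth rate by the positive factor `(1 + c) / D`, so it preserves
its sign, and it moves `x` in the direction of that sign. Hence on `R₂` we get
`h (F X Y) ≤ Y ≤ G X Y`, and `G X Y ≤ k X ≤ k (F X Y)` because `F X Y ≤ X` and `k` is decreasing. -/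

noncomputable def bevertonHolt (r K c x : ℝ) : ℝ := (1 + r) * x / (1 + r / K * x + c)

noncomputable def growthRate (r K c x : ℝ) : ℝ := r - r / K * x - c

section BevertonHolt

variable {r K c x : ℝ}

theorem bevertonHolt_sub_self (hD : 1 + r / K * x + c ≠ 0) :
    bevertonHolt r K c x - x = x * growthRate r K c x / (1 + r / K * x + c) := by
  unfold bevertonHolt growthRate
  rw [eq_div_iff hD, sub_mul, div_mul_cancel₀ _ hD]
  ring

theorem growthRate_bevertonHolt (hD : 1 + r / K * x + c ≠ 0) :
    growthRate r K c (bevertonHolt r K c x) =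
      (1 + c) * growthRate r K c x / (1 + r / K * x + c) := by
  unfold bevertonHolt growthRate
  generalize r / K = s at *
  field_simp
  ring

variable (hD : 0 < 1 + r / K * x + c)
include hD

theorem bevertonHolt_le_self (hx : 0 ≤ x) (hg : growthRate r K c x ≤ 0) :
    bevertonHolt r K c x ≤ x := by
  have := bevertonHolt_sub_self hD.ne'
  have : x * growthRate r K c x / (1 + r / K * x + c) ≤ 0 :=
    div_nonpos_of_nonpos_of_nonneg (mul_nonpos_of_nonneg_of_nonpos hx hg) hD.le
  linarith

theorem self_le_bevertonHolt (hx : 0 ≤ x) (hg : 0 ≤ growthRate r K c x) :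
    x ≤ bevertonHolt r K c x := by
  have := bevertonHolt_sub_self hD.ne'
  have : 0 ≤ x * growthRate r K c x / (1 + r / K * x + c) := by positivity
  linarith

theorem growthRate_bevertonHolt_nonpos (hc : 0 ≤ 1 + c) (hg : growthRate r K c x ≤ 0) :
    growthRate r K c (bevertonHolt r K c x) ≤ 0 := by
  rw [growthRate_bevertonHolt hD.ne']
  exact div_nonpos_of_nonpos_of_nonneg (mul_nonpos_of_nonneg_of_nonpos hc hg) hD.le

theorem growthRate_bevertonHolt_nonneg (hc : 0 ≤ 1 + c) (hg : 0 ≤ growthRate r K c x) :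
    0 ≤ growthRate r K c (bevertonHolt r K c x) := by
  rw [growthRate_bevertonHolt hD.ne']
  positivity

end BevertonHolt

theorem h_le_iff {r K α X Y : ℝ} (hK : 0 < K) (hα : 0 < α) :
    h r K α X ≤ Y ↔ growthRate r K (α * Y) X ≤ 0 := by
  have : r / (α * K) * (K - X) - Y = growthRate r K (α * Y) X / α := by
    unfold growthRate
    field_simp
  unfold h
  rw [← sub_nonpos, this, div_le_iff₀ hα, zero_mul]

theorem le_k_iff {r K α X Y : ℝ} (hr : 0 < r) (hK : 0 < K) :
    Y ≤ k r K α X ↔ 0 ≤ growthRate r K (α * X) Y := by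
  have : K / r * (r - α * X) - Y = K / r * growthRate r K (α * X) Y := by
    unfold growthRate
    field_simp
    ring
  unfold k
  rw [← sub_nonneg, this, mul_nonneg_iff_of_pos_left (by positivity)]

theorem k_antitone {r K α : ℝ} (hr : 0 < r) (hK : 0 < K) (hα : 0 ≤ α) :
    Antitone (k r K α) := by
  intro a b hab
  unfold k
  gcongr

theorem stmt8_general (r₁ r₂ K₁ K₂ α₁ α₂ : ℝ)
    (hr₁ : 0 < r₁) (hr₂ : 0 < r₂) (hK₁ : 0 < K₁) (hK₂ : 0 < K₂)
    (hα₁ : 0 < α₁) (hα₂ : 0 < α₂)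
    (X Y : ℝ) (hX : 0 < X) (hY : 0 < Y)
    (h1 : h r₁ K₁ α₁ X ≤ Y) (h2 : Y ≤ k r₂ K₂ α₂ X) :
    0 < F r₁ K₁ α₁ X Y ∧ 0 < G r₂ K₂ α₂ X Y ∧
      h r₁ K₁ α₁ (F r₁ K₁ α₁ X Y) ≤ G r₂ K₂ α₂ X Y ∧
      G r₂ K₂ α₂ X Y ≤ k r₂ K₂ α₂ (F r₁ K₁ α₁ X Y) := by
  have hD₁ : 0 < 1 + r₁ / K₁ * X + α₁ * Y := by positivity
  have hD₂ : 0 < 1 + r₂ / K₂ * Y + α₂ * X := by positivity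
  have hgX : growthRate r₁ K₁ (α₁ * Y) X ≤ 0 := (h_le_iff hK₁ hα₁).1 h1
  have hgY : 0 ≤ growthRate r₂ K₂ (α₂ * X) Y := (le_k_iff hr₂ hK₂).1 h2
  refine ⟨by unfold F; positivity, by unfold G; positivity, ?_, ?_⟩
  · calc h r₁ K₁ α₁ (F r₁ K₁ α₁ X Y) ≤ Y :=
          (h_le_iff hK₁ hα₁).2 (growthRate_bevertonHolt_nonpos hD₁ (by positivity) hgX)
      _ ≤ G r₂ K₂ α₂ X Y := self_le_bevertonHolt hD₂ hY.le hgY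
  · calc G r₂ K₂ α₂ X Y ≤ k r₂ K₂ α₂ X :=
          (le_k_iff hr₂ hK₂).2 (growthRate_bevertonHolt_nonneg hD₂ (by positivity) hgY)
      _ ≤ k r₂ K₂ α₂ (F r₁ K₁ α₁ X Y) :=
          k_antitone hr₂ hK₂ hα₂.le (bevertonHolt_le_self hD₁ hX.le hgX)

theorem stmt8 (r₁ r₂ K₁ K₂ α₁ α₂ : ℝ)
    (hr₁ : 0 < r₁) (hr₂ : 0 < r₂) (hK₁ : 0 < K₁) (hK₂ : 0 < K₂)
    (hα₁ : 0 < α₁) (hα₂ : 0 < α₂)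
    (hC12 : r₁ / α₁ < K₂) (hC21 : K₁ < r₂ / α₂)
    (X Y : ℝ) (hX : 0 < X) (hY : 0 < Y)
    (h1 : h r₁ K₁ α₁ X ≤ Y) (h2 : Y ≤ k r₂ K₂ α₂ X) :
    0 < F r₁ K₁ α₁ X Y ∧ 0 < G r₂ K₂ α₂ X Y ∧
      h r₁ K₁ α₁ (F r₁ K₁ α₁ X Y) ≤ G r₂ K₂ α₂ X Y ∧
      G r₂ K₂ α₂ X Y ≤ k r₂ K₂ α₂ (F r₁ K₁ α₁ X Y) :=
  stmt8_general r₁ r₂ K₁ K₂ α₁ α₂ hr₁ hr₂ hK₁ hK₂ hα₁ hα₂ X Y hX hY h1 h2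
end

section
/- For the Leslie–Gower competition map, if C₁₂ < 0 and C₂₁ > 0 (i.e., r₁/α₁ < K₂ and r₂/α₂ > K₁), then L_h(X,Y) > 0 for all (X,Y) with X, Y > 0 and Y ≥ h(X), i.e., on R₂ ∪ R₃ where R₂ = {h(X) ≤ Y ≤ k(X)} and R₃ = {Y > k(X)} (intersected with the open first quadrant). -/
/-
In the coordinates x = X / K₁, s = α₁ Y / r₁ the region Y ≥ h(X) is the half-plane s + x ≥ 1, and
L_h is r₁ / α₁ times the difference of (1 + r₂) s / (1 + r₂ p s + r₂ q x) and
(1 - x + r₁ s) / (1 + r₁ x + r₁ s), where p = r₁ / (α₁ K₂) < 1 and q = α₂ K₁ / r₂ < 1 encode the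
sign conditions on C₁₂ and C₂₁. Replacing p and q by 1 only lowers the first fraction, and then
(1 + r₂) s (1 + r₁ (s + x)) - (1 - x + r₁ s) (1 + r₂ (s + x)) = (s + x - 1) (1 + r₁ s + r₂ x) ≥ 0.
-/

theorem normalized_nullcline_lt {r₁ r₂ p q s x : ℝ} (hr₁ : 0 < r₁) (hr₂ : 0 < r₂)
    (hp₀ : 0 ≤ p) (hp₁ : p < 1) (hq₀ : 0 ≤ q) (hq₁ : q ≤ 1) (hs : 0 < s) (hx : 0 ≤ x)
    (hsx : 1 ≤ s + x) :
    (1 - x + r₁ * s) / (1 + r₁ * x + r₁ * s) < (1 + r₂) * s / (1 + r₂ * p * s + r₂ * q * x) := by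
  have hD₁ : 0 < 1 + r₁ * x + r₁ * s := by positivity
  have hD₂ : 0 < 1 + r₂ * p * s + r₂ * q * x := by positivity
  rcases le_or_gt (1 - x + r₁ * s) 0 with hN | hN
  · calc (1 - x + r₁ * s) / (1 + r₁ * x + r₁ * s) ≤ 0 := div_nonpos_of_nonpos_of_nonneg hN hD₁.le
      _ < _ := by positivity
  rw [div_lt_div_iff₀ hD₁ hD₂]
  have hD₂_lt : 1 + r₂ * p * s + r₂ * q * x < 1 + r₂ * (s + x) := by
    have : r₂ * p * s < r₂ * s := by nlinarith [mul_pos hr₂ hs]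
    nlinarith [mul_nonneg hr₂.le hx]
  calc (1 - x + r₁ * s) * (1 + r₂ * p * s + r₂ * q * x)
      < (1 - x + r₁ * s) * (1 + r₂ * (s + x)) := mul_lt_mul_of_pos_left hD₂_lt hN
    _ = (1 + r₂) * s * (1 + r₁ * x + r₁ * s) - (s + x - 1) * (1 + r₁ * s + r₂ * x) := by ring
    _ ≤ (1 + r₂) * s * (1 + r₁ * x + r₁ * s) :=
      sub_le_self _ (mul_nonneg (by linarith) (by positivity))

theorem G_eq_normalized {r₁ r₂ K₁ K₂ α₁ α₂ : ℝ} (hr₁ : 0 < r₁) (hr₂ : 0 < r₂) (hK₁ : 0 < K₁)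
    (hK₂ : 0 < K₂) (hα₁ : 0 < α₁) (hα₂ : 0 < α₂) {X Y : ℝ} (hX : 0 ≤ X) (hY : 0 ≤ Y) :
    G r₂ K₂ α₂ X Y = r₁ / α₁ * ((1 + r₂) * (α₁ * Y / r₁) /
      (1 + r₂ * (r₁ / (α₁ * K₂)) * (α₁ * Y / r₁) + r₂ * (α₂ * K₁ / r₂) * (X / K₁))) := by
  have hD : 0 < 1 + r₂ / K₂ * Y + α₂ * X := by positivity
  have hD' : 0 < 1 + r₂ * (r₁ / (α₁ * K₂)) * (α₁ * Y / r₁) + r₂ * (α₂ * K₁ / r₂) * (X / K₁) := by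
    positivity
  unfold G
  field_simp

theorem h_F_eq_normalized {r₁ K₁ α₁ : ℝ} (hr₁ : 0 < r₁) (hK₁ : 0 < K₁) (hα₁ : 0 < α₁)
    {X Y : ℝ} (hX : 0 ≤ X) (hY : 0 ≤ Y) :
    h r₁ K₁ α₁ (F r₁ K₁ α₁ X Y) = r₁ / α₁ * ((1 - X / K₁ + r₁ * (α₁ * Y / r₁)) /
      (1 + r₁ * (X / K₁) + r₁ * (α₁ * Y / r₁))) := by
  have hD : 0 < 1 + r₁ / K₁ * X + α₁ * Y := by positivity
  have hD' : 0 < 1 + r₁ * (X / K₁) + r₁ * (α₁ * Y / r₁) := by positivity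
  unfold h F
  field_simp
  ring

theorem stmt9 (r₁ r₂ K₁ K₂ α₁ α₂ : ℝ)
    (hr₁ : 0 < r₁) (hr₂ : 0 < r₂) (hK₁ : 0 < K₁) (hK₂ : 0 < K₂)
    (hα₁ : 0 < α₁) (hα₂ : 0 < α₂)
    (hC12 : r₁ / α₁ < K₂) (hC21 : K₁ < r₂ / α₂)
    (X Y : ℝ) (hX : 0 < X) (hY : 0 < Y)
    (hreg : h r₁ K₁ α₁ X ≤ Y) :
    0 < G r₂ K₂ α₂ X Y - h r₁ K₁ α₁ (F r₁ K₁ α₁ X Y) := by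
  have hp : r₁ / (α₁ * K₂) < 1 := by
    rw [div_lt_one (by positivity)]; rwa [div_lt_iff₀ hα₁, mul_comm] at hC12
  have hq : α₂ * K₁ / r₂ ≤ 1 := by
    rw [div_le_one hr₂]; rw [lt_div_iff₀ hα₂, mul_comm] at hC21; exact hC21.le
  have hsx : 1 ≤ α₁ * Y / r₁ + X / K₁ := by
    unfold h at hreg
    rw [div_add_div _ _ hr₁.ne' hK₁.ne', le_div_iff₀ (by positivity)]
    rw [div_mul_eq_mul_div, div_le_iff₀ (by positivity)] at hreg
    linarith
  have key := normalized_nullcline_lt hr₁ hr₂ (by positivity) hp (by positivity) hq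
    (by positivity : 0 < α₁ * Y / r₁) (by positivity : 0 ≤ X / K₁) hsx
  rw [G_eq_normalized hr₁ hr₂ hK₁ hK₂ hα₁ hα₂ hX.le hY.le,
    h_F_eq_normalized hr₁ hK₁ hα₁ hX.le hY.le, ← mul_sub]
  exact mul_pos (by positivity) (sub_pos.mpr key)
end

section
/- For the Leslie–Gower competition map, if C₁₂ < 0 and C₂₁ > 0, then L_k(X,Y) < 0 for all (X,Y) in the open first quadrant with Y ≤ k(X), i.e., on R₁ ∪ R₂ where R₁ = {Y < h(X)} and R₂ = {h(X) ≤ Y ≤ k(X)}. -/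
lemma one_add_mul_div_le_mul_div {s R u a : ℝ} (hs : 0 ≤ s) (hR : 0 < R) (hu : 0 < u)
    (huR : u ≤ R) (ha : 0 ≤ a) :
    (1 + s) * a / (1 + s * u / R) ≤ R * a / u := by
  have hden : 0 < 1 + s * u / R := by positivity
  rw [div_le_div_iff₀ hden hu]
  have hcoef : (1 + s) * u ≤ R * (1 + s * u / R) := by
    rw [mul_add, mul_div_cancel₀ _ hR.ne']
    nlinarith
  calc (1 + s) * a * u = (1 + s) * u * a := by ring
    _ ≤ R * (1 + s * u / R) * a := mul_le_mul_of_nonneg_right hcoef ha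
    _ = R * a * (1 + s * u / R) := by ring

section Nullcline

variable {r₂ K₂ α₂ : ℝ}

lemma le_k_iff_s10 (hr₂ : 0 < r₂) (hK₂ : 0 < K₂) {X Y : ℝ} :
    Y ≤ k r₂ K₂ α₂ X ↔ r₂ / K₂ * Y + α₂ * X ≤ r₂ := by
  rw [k, ← sub_nonneg, ← sub_nonneg (a := r₂)]
  have hfac : K₂ / r₂ * (r₂ - α₂ * X) - Y = K₂ / r₂ * (r₂ - (r₂ / K₂ * Y + α₂ * X)) := by
    field_simp
    ring
  rw [hfac]
  exact mul_nonneg_iff_of_pos_left (by positivity)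

lemma sub_k_neg_iff (hr₂ : 0 < r₂) (hK₂ : 0 < K₂) {W Z : ℝ} :
    W - k r₂ K₂ α₂ Z < 0 ↔ r₂ / K₂ * W + α₂ * Z < r₂ := by
  rw [k]
  have hfac : W - K₂ / r₂ * (r₂ - α₂ * Z) = K₂ / r₂ * (r₂ / K₂ * W + α₂ * Z - r₂) := by
    field_simp
    ring
  rw [hfac, ← not_le, mul_nonneg_iff_of_pos_left (by positivity), not_le, sub_neg]

end Nullcline

lemma mul_G_eq {r₂ K₂ α₂ X Y : ℝ} (hr₂ : 0 < r₂) :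
    r₂ / K₂ * G r₂ K₂ α₂ X Y =
      (1 + r₂) * (r₂ / K₂ * Y) / (1 + r₂ * (r₂ / K₂ * Y + α₂ * X) / r₂) := by
  rw [G, mul_div_cancel_left₀ _ hr₂.ne', ← add_assoc]
  ring

lemma mul_F_lt {r₁ r₂ K₁ K₂ α₁ α₂ X Y : ℝ} (hr₁ : 0 < r₁) (hr₂ : 0 < r₂) (hK₁ : 0 < K₁)
    (hK₂ : 0 < K₂) (hα₂ : 0 < α₂) (hC12 : r₁ < K₂ * α₁) (hC21 : K₁ * α₂ < r₂)
    (hX : 0 < X) (hY : 0 ≤ Y) :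
    α₂ * F r₁ K₁ α₁ X Y <
      (1 + r₁) * (α₂ * X) / (1 + r₁ * (r₂ / K₂ * Y + α₂ * X) / r₂) := by
  have hxterm : r₁ * (α₂ * X) / r₂ < r₁ / K₁ * X := by
    have hcoef : α₂ / r₂ < 1 / K₁ := by
      rw [div_lt_div_iff₀ hr₂ hK₁]
      linarith
    calc r₁ * (α₂ * X) / r₂ = r₁ * X * (α₂ / r₂) := by ring
      _ < r₁ * X * (1 / K₁) := mul_lt_mul_of_pos_left hcoef (by positivity)
      _ = r₁ / K₁ * X := by ring
  have hyterm : r₁ * (r₂ / K₂ * Y) / r₂ ≤ α₁ * Y := by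
    have hcoef : r₁ / K₂ ≤ α₁ := by
      rw [div_le_iff₀ hK₂]
      linarith
    calc r₁ * (r₂ / K₂ * Y) / r₂ = r₁ / K₂ * Y := by field_simp
      _ ≤ α₁ * Y := mul_le_mul_of_nonneg_right hcoef hY
  have hden : 1 + r₁ * (r₂ / K₂ * Y + α₂ * X) / r₂ < 1 + r₁ / K₁ * X + α₁ * Y := by
    rw [mul_add, add_div]
    linarith
  rw [F, mul_div_assoc', mul_left_comm]
  exact div_lt_div_of_pos_left (by positivity) (by positivity) hden

theorem stmt10 (r₁ r₂ K₁ K₂ α₁ α₂ : ℝ)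
    (hr₁ : 0 < r₁) (hr₂ : 0 < r₂) (hK₁ : 0 < K₁) (hK₂ : 0 < K₂)
    (hα₁ : 0 < α₁) (hα₂ : 0 < α₂)
    (hC12 : r₁ / α₁ < K₂) (hC21 : K₁ < r₂ / α₂)
    (X Y : ℝ) (hX : 0 < X) (hY : 0 < Y)
    (hreg : Y ≤ k r₂ K₂ α₂ X) :
    G r₂ K₂ α₂ X Y - k r₂ K₂ α₂ (F r₁ K₁ α₁ X Y) < 0 := by
  rw [sub_k_neg_iff hr₂ hK₂]
  rw [le_k_iff_s10 hr₂ hK₂] at hreg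
  set a := r₂ / K₂ * Y
  set b := α₂ * X
  have ha : 0 ≤ a := by positivity
  have hb : 0 < b := by positivity
  have hG_le := one_add_mul_div_le_mul_div hr₂.le hr₂ (by positivity) hreg ha
  have hF_le := one_add_mul_div_le_mul_div hr₁.le hr₂ (by positivity) hreg hb.le
  have hF_lt := mul_F_lt hr₁ hr₂ hK₁ hK₂ hα₂ ((div_lt_iff₀ hα₁).1 hC12)
    ((lt_div_iff₀ hα₂).1 hC21) hX hY.le
  have hsplit : r₂ * a / (a + b) + r₂ * b / (a + b) = r₂ := by
    field_simp
  rw [mul_G_eq hr₂]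
  linarith
end

section
/- For the Leslie–Gower competition map with C₁₂ < 0 and C₂₁ > 0, every orbit with initial condition X₀ > 0, Y₀ > 0 converges to the boundary equilibrium E₂ = (0, K₂) as t → ∞. -/
noncomputable def T (r₁ r₂ K₁ K₂ α₁ α₂ : ℝ) (p : ℝ × ℝ) : ℝ × ℝ :=
  (F r₁ K₁ α₁ p.1 p.2, G r₂ K₂ α₂ p.1 p.2)

/-!
`T` is monotone for the competitive order, in which `q` dominates `p` when it lies south-east of
it. While above `K₁`, the first coordinate contracts geometrically, so every orbit eventually
enters a strip `x ≤ c` with `K₁ < c < r₂ / α₂`, and there it is dominated by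
`q = (c, min (k c) y)`. Since `x ≥ K₁` shrinks and `y ≤ k x` grows, `T` moves `q` north-west;
so the orbit of `q` is monotone in both coordinates, bounded, and converges to a fixed point
with `y > 0`. The nullclines `y = h x` and `y = k x` do not meet in the quadrant, so this fixed
point is `(0, K₂)`. Domination squeezes `x` to `0` and bounds `y` below by a sequence tending
to `K₂`, while `y` is eventually below `K₂ + ε` by the one-dimensional contraction.
-/

open Filter Topology

namespace LeslieGower

section BevertonHolt

variable {r K α : ℝ}

lemma F_nonneg (hr : 0 ≤ r) (hK : 0 ≤ K) (hα : 0 ≤ α) {X Y : ℝ} (hX : 0 ≤ X) (hY : 0 ≤ Y) :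
    0 ≤ F r K α X Y := by
  unfold F; positivity

lemma F_pos (hr : 0 ≤ r) (hK : 0 ≤ K) (hα : 0 ≤ α) {X Y : ℝ} (hX : 0 < X) (hY : 0 ≤ Y) :
    0 < F r K α X Y := by
  unfold F; positivity

lemma F_le_F (hr : 0 ≤ r) (hK : 0 ≤ K) (hα : 0 ≤ α) {x₁ x₂ y₁ y₂ : ℝ}
    (hx₁ : 0 ≤ x₁) (hx : x₁ ≤ x₂) (hy₂ : 0 ≤ y₂) (hy : y₂ ≤ y₁) :
    F r K α x₁ y₁ ≤ F r K α x₂ y₂ := by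
  have hxy : x₁ * y₂ ≤ x₂ * y₁ := mul_le_mul hx hy hy₂ (hx₁.trans hx)
  have key : x₁ * (1 + r / K * x₂ + α * y₂) ≤ x₂ * (1 + r / K * x₁ + α * y₁) := by
    nlinarith [mul_le_mul_of_nonneg_left hxy hα]
  have hx₂ : 0 ≤ x₂ := hx₁.trans hx
  have hy₁ : 0 ≤ y₁ := hy₂.trans hy
  unfold F
  rw [div_le_div_iff₀ (by positivity) (by positivity)]
  nlinarith [mul_le_mul_of_nonneg_left key (by linarith : (0 : ℝ) ≤ 1 + r)]

lemma F_le_of_le (hr : 0 ≤ r) (hK : 0 < K) (hα : 0 ≤ α) {B X Y : ℝ} (hKB : K ≤ B)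
    (hX : 0 ≤ X) (hXB : X ≤ B) (hY : 0 ≤ Y) : F r K α X Y ≤ B := by
  have hs : r / K * K = r := div_mul_cancel₀ r hK.ne'
  have hgrowth : r * X ≤ r / K * X * B := by
    nlinarith [mul_nonneg (mul_nonneg (div_nonneg hr hK.le) hX) (sub_nonneg.2 hKB)]
  unfold F
  rw [div_le_iff₀ (by positivity)]
  nlinarith [mul_nonneg (mul_nonneg hα hY) (hK.le.trans hKB)]

lemma F_le_mul_self (hr : 0 ≤ r) (hK : 0 ≤ K) (hα : 0 ≤ α) {c X Y : ℝ} (hc : 0 ≤ c)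
    (hcX : c ≤ X) (hY : 0 ≤ Y) : F r K α X Y ≤ (1 + r) / (1 + r / K * c) * X := by
  have hs : 0 ≤ r / K := div_nonneg hr hK
  calc F r K α X Y = (1 + r) * X / (1 + r / K * X + α * Y) := rfl
    _ ≤ (1 + r) * X / (1 + r / K * c) := by
      refine div_le_div_of_nonneg_left (by nlinarith) (by positivity) ?_
      nlinarith [mul_le_mul_of_nonneg_left hcX hs, mul_nonneg hα hY]
    _ = (1 + r) / (1 + r / K * c) * X := by ring

lemma self_le_F (hr : 0 ≤ r) (hK : 0 ≤ K) (hα : 0 ≤ α) {X Y : ℝ} (hX : 0 ≤ X) (hY : 0 ≤ Y)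
    (hbelow : r / K * X + α * Y ≤ r) : X ≤ F r K α X Y := by
  unfold F
  rw [le_div_iff₀ (by positivity)]
  nlinarith [mul_nonneg hX (sub_nonneg.2 hbelow)]

lemma F_eq_self_iff (hr : 0 ≤ r) (hK : 0 ≤ K) (hα : 0 ≤ α) {X Y : ℝ} (hX : 0 ≤ X)
    (hY : 0 ≤ Y) : F r K α X Y = X ↔ X = 0 ∨ r / K * X + α * Y = r := by
  unfold F
  rw [div_eq_iff (by positivity), ← sub_eq_zero, or_comm, ← sub_eq_zero (a := r / K * X + α * Y),
    ← mul_eq_zero]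
  constructor <;> intro h <;> linear_combination -h

variable {x y : ℕ → ℝ}

lemma le_of_F_rec (hr : 0 ≤ r) (hK : 0 < K) (hα : 0 ≤ α) (hx : ∀ t, 0 ≤ x t) (hy : ∀ t, 0 ≤ y t)
    (hrec : ∀ t, x (t + 1) = F r K α (x t) (y t)) {B : ℝ} (hKB : K ≤ B) (h0 : x 0 ≤ B) (t : ℕ) :
    x t ≤ B := by
  induction t with
  | zero => exact h0
  | succ t ih => rw [hrec]; exact F_le_of_le hr hK hα hKB (hx t) ih (hy t)

lemma exists_le_of_F_rec (hr : 0 < r) (hK : 0 < K) (hα : 0 ≤ α) (hy : ∀ t, 0 ≤ y t)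
    (hrec : ∀ t, x (t + 1) = F r K α (x t) (y t)) {B : ℝ} (hKB : K < B) : ∃ t, x t ≤ B := by
  have hB : 0 < B := hK.trans hKB
  set c := (1 + r) / (1 + r / K * B)
  have hc0 : 0 ≤ c := by positivity
  have hc1 : c < 1 := by
    have : r < r / K * B := by rw [div_mul_eq_mul_div, lt_div_iff₀ hK]; nlinarith
    rw [div_lt_one (by positivity)]
    linarith
  by_contra! hgt
  have hgeom : ∀ t, x t ≤ c ^ t * x 0 := by
    intro t
    induction t with
    | zero => simp
    | succ t ih =>
      calc x (t + 1) ≤ c * x t := by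
            rw [hrec]; exact F_le_mul_self hr.le hK.le hα hB.le (hgt t).le (hy t)
        _ ≤ c * (c ^ t * x 0) := mul_le_mul_of_nonneg_left ih hc0
        _ = c ^ (t + 1) * x 0 := by ring
  have hdecay : Tendsto (fun t => c ^ t * x 0) atTop (𝓝 0) := by
    simpa using (tendsto_pow_atTop_nhds_zero_of_lt_one hc0 hc1).mul_const (x 0)
  obtain ⟨t, ht⟩ := (hdecay.eventually_lt_const hB).exists
  exact (hgt t).not_ge ((hgeom t).trans ht.le)

lemma eventually_le_of_F_rec (hr : 0 < r) (hK : 0 < K) (hα : 0 ≤ α) (hx : ∀ t, 0 ≤ x t)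
    (hy : ∀ t, 0 ≤ y t) (hrec : ∀ t, x (t + 1) = F r K α (x t) (y t)) {B : ℝ} (hKB : K < B) :
    ∀ᶠ t in atTop, x t ≤ B := by
  obtain ⟨t₀, ht₀⟩ := exists_le_of_F_rec hr hK hα hy hrec hKB
  refine eventually_atTop.2 ⟨t₀, fun t ht => ?_⟩
  obtain ⟨s, rfl⟩ := Nat.exists_eq_add_of_le' ht
  exact le_of_F_rec hr.le hK hα (fun s => hx (s + t₀)) (fun s => hy (s + t₀))
    (fun s => by rw [add_right_comm]; exact hrec (s + t₀)) hKB.le (by rwa [zero_add]) s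

end BevertonHolt

section Nullclines

variable {r₁ r₂ K₁ K₂ α₁ α₂ x y : ℝ}

lemma sub_h (hK₁ : K₁ ≠ 0) (hα₁ : α₁ ≠ 0) :
    y - h r₁ K₁ α₁ x = (r₁ / K₁ * x + α₁ * y - r₁) / α₁ := by
  unfold h; field_simp; ring

lemma k_sub (hr₂ : r₂ ≠ 0) (hK₂ : K₂ ≠ 0) :
    k r₂ K₂ α₂ x - y = K₂ / r₂ * (r₂ - (r₂ / K₂ * y + α₂ * x)) := by
  unfold k; field_simp; ring

lemma eq_h_iff (hK₁ : 0 < K₁) (hα₁ : 0 < α₁) :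
    y = h r₁ K₁ α₁ x ↔ r₁ / K₁ * x + α₁ * y = r₁ := by
  rw [← sub_eq_zero, sub_h hK₁.ne' hα₁.ne', div_eq_zero_iff, sub_eq_zero, or_iff_left hα₁.ne']

lemma eq_k_iff (hr₂ : 0 < r₂) (hK₂ : 0 < K₂) :
    y = k r₂ K₂ α₂ x ↔ r₂ / K₂ * y + α₂ * x = r₂ := by
  rw [eq_comm, ← sub_eq_zero, k_sub hr₂.ne' hK₂.ne', mul_eq_zero, sub_eq_zero, eq_comm (a := r₂),
    or_iff_right (by positivity)]

lemma le_k_iff (hr₂ : 0 < r₂) (hK₂ : 0 < K₂) :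
    y ≤ k r₂ K₂ α₂ x ↔ r₂ / K₂ * y + α₂ * x ≤ r₂ := by
  rw [← sub_nonneg, k_sub hr₂.ne' hK₂.ne', mul_nonneg_iff_of_pos_left (by positivity), sub_nonneg]

lemma h_neg (hr₁ : 0 < r₁) (hK₁ : 0 < K₁) (hα₁ : 0 < α₁) (hx : K₁ < x) : h r₁ K₁ α₁ x < 0 := by
  unfold h
  exact mul_neg_of_pos_of_neg (by positivity) (by linarith)

lemma h_lt_k (hr₂ : 0 < r₂) (hK₁ : 0 < K₁) (hK₂ : 0 < K₂) (hα₁ : 0 < α₁) (hα₂ : 0 < α₂)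
    (hC12 : r₁ / α₁ < K₂) (hC21 : K₁ < r₂ / α₂) (hx₀ : 0 ≤ x) (hxK : x ≤ K₁) :
    h r₁ K₁ α₁ x < k r₂ K₂ α₂ x := by
  -- `k - h` is affine in `x`, positive at `x = 0` by `hC12` and at `x = K₁` by `hC21`.
  have key : K₁ * (k r₂ K₂ α₂ x - h r₁ K₁ α₁ x)
      = (K₁ - x) * (K₂ - r₁ / α₁) + x * (K₂ / r₂ * α₂ * (r₂ / α₂ - K₁)) := by
    unfold h k; field_simp; ring
  have hpos : 0 < K₁ * (k r₂ K₂ α₂ x - h r₁ K₁ α₁ x) := by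
    rw [key]
    rcases hxK.lt_or_eq with hlt | rfl
    · have : 0 ≤ x * (K₂ / r₂ * α₂ * (r₂ / α₂ - K₁)) :=
        mul_nonneg hx₀ (mul_nonneg (by positivity) (by linarith))
      nlinarith
    · simp only [sub_self, zero_mul, zero_add]
      exact mul_pos hK₁ (mul_pos (by positivity) (by linarith))
  linarith [pos_of_mul_pos_right hpos hK₁.le]

end Nullclines

structure PosParams (r₁ r₂ K₁ K₂ α₁ α₂ : ℝ) : Prop where
  hr₁ : 0 < r₁
  hr₂ : 0 < r₂
  hK₁ : 0 < K₁
  hK₂ : 0 < K₂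
  hα₁ : 0 < α₁
  hα₂ : 0 < α₂

def CompetitiveLE (p q : ℝ × ℝ) : Prop :=
  0 ≤ p.1 ∧ p.1 ≤ q.1 ∧ 0 ≤ q.2 ∧ q.2 ≤ p.2

section Map

variable {r₁ r₂ K₁ K₂ α₁ α₂ : ℝ} {p q : ℝ × ℝ}

@[simp] lemma T_fst : (T r₁ r₂ K₁ K₂ α₁ α₂ p).1 = F r₁ K₁ α₁ p.1 p.2 := rfl

@[simp] lemma T_snd : (T r₁ r₂ K₁ K₂ α₁ α₂ p).2 = F r₂ K₂ α₂ p.2 p.1 := rfl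

lemma CompetitiveLE.map_T (hP : PosParams r₁ r₂ K₁ K₂ α₁ α₂) (hpq : CompetitiveLE p q) :
    CompetitiveLE (T r₁ r₂ K₁ K₂ α₁ α₂ p) (T r₁ r₂ K₁ K₂ α₁ α₂ q) := by
  obtain ⟨hr₁, hr₂, hK₁, hK₂, hα₁, hα₂⟩ := hP
  obtain ⟨hp₁, h₁, hq₂, h₂⟩ := hpq
  exact ⟨F_nonneg hr₁.le hK₁.le hα₁.le hp₁ (hq₂.trans h₂),
    F_le_F hr₁.le hK₁.le hα₁.le hp₁ h₁ hq₂ h₂,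
    F_nonneg hr₂.le hK₂.le hα₂.le hq₂ (hp₁.trans h₁),
    F_le_F hr₂.le hK₂.le hα₂.le hq₂ h₂ hp₁ h₁⟩

lemma CompetitiveLE.iterate_T (hP : PosParams r₁ r₂ K₁ K₂ α₁ α₂) (hpq : CompetitiveLE p q)
    (n : ℕ) : CompetitiveLE ((T r₁ r₂ K₁ K₂ α₁ α₂)^[n] p) ((T r₁ r₂ K₁ K₂ α₁ α₂)^[n] q) := by
  induction n with
  | zero => exact hpq
  | succ n ih => simpa only [Function.iterate_succ_apply'] using ih.map_T hP

lemma continuousAt_T (hP : PosParams r₁ r₂ K₁ K₂ α₁ α₂) (hp₁ : 0 ≤ p.1) (hp₂ : 0 ≤ p.2) :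
    ContinuousAt (T r₁ r₂ K₁ K₂ α₁ α₂) p := by
  obtain ⟨hr₁, hr₂, hK₁, hK₂, hα₁, hα₂⟩ := hP
  unfold T F G
  exact ((by fun_prop : ContinuousAt _ p).div (by fun_prop) (by positivity)).prodMk
    ((by fun_prop : ContinuousAt _ p).div (by fun_prop) (by positivity))

lemma eq_of_isFixedPt_T (hP : PosParams r₁ r₂ K₁ K₂ α₁ α₂) (hC12 : r₁ / α₁ < K₂)
    (hC21 : K₁ < r₂ / α₂) (hp₁ : 0 ≤ p.1) (hp₂ : 0 < p.2)
    (hfix : Function.IsFixedPt (T r₁ r₂ K₁ K₂ α₁ α₂) p) : p = (0, K₂) := by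
  obtain ⟨hr₁, hr₂, hK₁, hK₂, hα₁, hα₂⟩ := hP
  have hfix₁ : F r₁ K₁ α₁ p.1 p.2 = p.1 := congrArg Prod.fst hfix
  have hfix₂ : F r₂ K₂ α₂ p.2 p.1 = p.2 := congrArg Prod.snd hfix
  have hk : p.2 = k r₂ K₂ α₂ p.1 := (eq_k_iff hr₂ hK₂).2
    (((F_eq_self_iff hr₂.le hK₂.le hα₂.le hp₂.le hp₁).1 hfix₂).resolve_left hp₂.ne')
  rcases (F_eq_self_iff hr₁.le hK₁.le hα₁.le hp₁ hp₂.le).1 hfix₁ with hx | hline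
  · ext
    · exact hx
    · simp [hk, hx, k, hr₂.ne']
  · have hh : p.2 = h r₁ K₁ α₁ p.1 := (eq_h_iff hK₁ hα₁).2 hline
    have hxK : p.1 ≤ K₁ := not_lt.1 fun hgt => (h_neg hr₁ hK₁ hα₁ hgt).not_ge (hh ▸ hp₂.le)
    exact absurd (hh.symm.trans hk) (h_lt_k hr₂ hK₁ hK₂ hα₁ hα₂ hC12 hC21 hp₁ hxK).ne

lemma tendsto_iterate_T_of_competitiveLE (hP : PosParams r₁ r₂ K₁ K₂ α₁ α₂)
    (hC12 : r₁ / α₁ < K₂) (hC21 : K₁ < r₂ / α₂) (hq : CompetitiveLE (T r₁ r₂ K₁ K₂ α₁ α₂ q) q)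
    (hq₂ : 0 < q.2) : Tendsto (fun n => (T r₁ r₂ K₁ K₂ α₁ α₂)^[n] q) atTop (𝓝 (0, K₂)) := by
  set u := fun n => (T r₁ r₂ K₁ K₂ α₁ α₂)^[n] q
  have hstep (n : ℕ) : CompetitiveLE (u (n + 1)) (u n) := by
    simpa only [u, Function.iterate_succ_apply] using hq.iterate_T hP n
  have hanti : Antitone fun n => (u n).1 := antitone_nat_of_succ_le fun n => (hstep n).2.1
  have hmono : Monotone fun n => (u n).2 := monotone_nat_of_le_succ fun n => (hstep n).2.2.2
  have hu₁ (n : ℕ) : 0 ≤ (u n).1 := (hstep n).1.trans (hstep n).2.1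
  have hu₂ (n : ℕ) : q.2 ≤ (u n).2 := hmono (Nat.zero_le n)
  have hbdd : ∀ n, (u n).2 ≤ max K₂ q.2 :=
    le_of_F_rec hP.hr₂.le hP.hK₂ hP.hα₂.le (fun n => hq₂.le.trans (hu₂ n)) hu₁
      (fun n => by simp only [u, Function.iterate_succ_apply', T_snd]) (le_max_left _ _)
      (le_max_right _ _)
  have hlim₁ := tendsto_atTop_ciInf hanti ⟨0, by rintro _ ⟨n, rfl⟩; exact hu₁ n⟩
  have hlim₂ := tendsto_atTop_ciSup hmono ⟨max K₂ q.2, by rintro _ ⟨n, rfl⟩; exact hbdd n⟩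
  have hlim := hlim₁.prodMk_nhds hlim₂
  have ha : 0 ≤ ⨅ n, (u n).1 := ge_of_tendsto' hlim₁ hu₁
  have hb : 0 < ⨆ n, (u n).2 := hq₂.trans_le (ge_of_tendsto' hlim₂ hu₂)
  have hfix := isFixedPt_of_tendsto_iterate hlim (continuousAt_T hP ha hb.le)
  rwa [eq_of_isFixedPt_T hP hC12 hC21 ha hb hfix] at hlim

lemma tendsto_iterate_T_of_fst_le (hP : PosParams r₁ r₂ K₁ K₂ α₁ α₂) (hC12 : r₁ / α₁ < K₂)
    (hC21 : K₁ < r₂ / α₂) {c : ℝ} (hKc : K₁ ≤ c) (hc : α₂ * c < r₂) (hp₁ : 0 ≤ p.1)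
    (hpc : p.1 ≤ c) (hp₂ : 0 < p.2) :
    Tendsto (fun n => (T r₁ r₂ K₁ K₂ α₁ α₂)^[n] p) atTop (𝓝 (0, K₂)) := by
  have ⟨hr₁, hr₂, hK₁, hK₂, hα₁, hα₂⟩ := hP
  set q : ℝ × ℝ := (c, min (k r₂ K₂ α₂ c) p.2)
  have hq₂ : 0 < q.2 := lt_min (by unfold k; exact mul_pos (by positivity) (by linarith)) hp₂
  have hq : CompetitiveLE (T r₁ r₂ K₁ K₂ α₁ α₂ q) q :=
    ⟨F_nonneg hr₁.le hK₁.le hα₁.le (hK₁.le.trans hKc) hq₂.le,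
      F_le_of_le hr₁.le hK₁ hα₁.le hKc (hK₁.le.trans hKc) le_rfl hq₂.le, hq₂.le,
      self_le_F hr₂.le hK₂.le hα₂.le hq₂.le (hK₁.le.trans hKc)
        ((le_k_iff hr₂ hK₂).1 (min_le_left _ _))⟩
  have hQ := tendsto_iterate_T_of_competitiveLE hP hC12 hC21 hq hq₂
  have hcmp := (show CompetitiveLE p q from ⟨hp₁, hpc, hq₂.le, min_le_right _ _⟩).iterate_T hP
  have hlim₁ : Tendsto (fun n => ((T r₁ r₂ K₁ K₂ α₁ α₂)^[n] p).1) atTop (𝓝 0) :=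
    squeeze_zero (fun n => (hcmp n).1) (fun n => (hcmp n).2.1) hQ.fst_nhds
  have hlim₂ : Tendsto (fun n => ((T r₁ r₂ K₁ K₂ α₁ α₂)^[n] p).2) atTop (𝓝 K₂) := by
    refine tendsto_order.2 ⟨fun b hb => ?_, fun b hb => ?_⟩
    · filter_upwards [hQ.snd_nhds.eventually (lt_mem_nhds hb)] with n hn
      exact hn.trans_le (hcmp n).2.2.2
    · have hupper := eventually_le_of_F_rec hr₂ hK₂ hα₂.le
        (fun n => (hcmp n).2.2.1.trans (hcmp n).2.2.2) (fun n => (hcmp n).1)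
        (fun n => by simp only [Function.iterate_succ_apply', T_snd])
        (show K₂ < (K₂ + b) / 2 by linarith)
      filter_upwards [hupper] with n hn
      linarith
  exact hlim₁.prodMk_nhds hlim₂

lemma tendsto_iterate_T (hP : PosParams r₁ r₂ K₁ K₂ α₁ α₂) (hC12 : r₁ / α₁ < K₂)
    (hC21 : K₁ < r₂ / α₂) (hp₁ : 0 ≤ p.1) (hp₂ : 0 < p.2) :
    Tendsto (fun n => (T r₁ r₂ K₁ K₂ α₁ α₂)^[n] p) atTop (𝓝 (0, K₂)) := by
  have ⟨hr₁, hr₂, hK₁, hK₂, hα₁, hα₂⟩ := hP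
  have horbit (n : ℕ) :
      0 ≤ ((T r₁ r₂ K₁ K₂ α₁ α₂)^[n] p).1 ∧ 0 < ((T r₁ r₂ K₁ K₂ α₁ α₂)^[n] p).2 := by
    induction n with
    | zero => exact ⟨hp₁, hp₂⟩
    | succ n ih =>
      rw [Function.iterate_succ_apply', T_fst, T_snd]
      exact ⟨F_nonneg hr₁.le hK₁.le hα₁.le ih.1 ih.2.le, F_pos hr₂.le hK₂.le hα₂.le ih.2 ih.1⟩
  obtain ⟨c, hKc, hc⟩ := exists_between hC21
  obtain ⟨t₀, ht₀⟩ := (eventually_le_of_F_rec hr₁ hK₁ hα₁.le (fun n => (horbit n).1)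
    (fun n => (horbit n).2.le) (fun n => by simp only [Function.iterate_succ_apply', T_fst])
    hKc).exists
  rw [← tendsto_add_atTop_iff_nat t₀]
  simp only [Function.iterate_add_apply]
  exact tendsto_iterate_T_of_fst_le hP hC12 hC21 hKc.le ((lt_div_iff₀' hα₂).1 hc) (horbit t₀).1
    ht₀ (horbit t₀).2

end Map

end LeslieGower

open LeslieGower in
theorem stmt11 (r₁ r₂ K₁ K₂ α₁ α₂ : ℝ)
    (hr₁ : 0 < r₁) (hr₂ : 0 < r₂) (hK₁ : 0 < K₁) (hK₂ : 0 < K₂)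
    (hα₁ : 0 < α₁) (hα₂ : 0 < α₂)
    (hC12 : r₁ / α₁ < K₂) (hC21 : K₁ < r₂ / α₂)
    (X Y : ℕ → ℝ) (hX0 : 0 < X 0) (hY0 : 0 < Y 0)
    (hrec : ∀ t, X (t + 1) = F r₁ K₁ α₁ (X t) (Y t) ∧
                 Y (t + 1) = G r₂ K₂ α₂ (X t) (Y t)) :
    Filter.Tendsto (fun t => (X t, Y t)) Filter.atTop (nhds ((0 : ℝ), K₂)) := by
  have horbit : (fun t => (X t, Y t)) = fun t => (T r₁ r₂ K₁ K₂ α₁ α₂)^[t] (X 0, Y 0) := by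
    funext t
    induction t with
    | zero => rfl
    | succ t ih => rw [Function.iterate_succ_apply', ← ih, (hrec t).1, (hrec t).2]; rfl
  rw [horbit]
  exact tendsto_iterate_T ⟨hr₁, hr₂, hK₁, hK₂, hα₁, hα₂⟩ hC12 hC21 hX0.le hY0
end

section
/- For the Leslie–Gower competition map with C₁₂ = C₂₁ = 0 (i.e., r₁/α₁ = K₂ and r₂/α₂ = K₁), the only positive root-curve associated with the nullcline Y = h(X) coincides with the nullcline itself; consequently L_h(X,Y) < 0 for all (X,Y) in R₁ = {(X,Y) : X, Y > 0, Y < h(X)} and L_h(X,Y) > 0 for all (X,Y) in R₂ = {(X,Y) : X, Y > 0, Y > h(X)}. -/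
lemma eq_div_of_div_eq {r α K : ℝ} (hK : K ≠ 0) (h : r / α = K) : α = r / K := by
  obtain ⟨hr, -⟩ := div_ne_zero_iff.mp (h ▸ hK)
  rw [← h, div_div_cancel₀ hr]

section DegenerateCompetition

variable {r₁ r₂ K₁ K₂ X Y : ℝ}

lemma G_sub_h_F_eq (hr₁ : r₁ ≠ 0) (hK₁ : K₁ ≠ 0) (hK₂ : K₂ ≠ 0)
    (hD₁ : 1 + r₁ / K₁ * X + r₁ / K₂ * Y ≠ 0) (hD₂ : 1 + r₂ / K₂ * Y + r₂ / K₁ * X ≠ 0) :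
    G r₂ K₂ (r₂ / K₁) X Y - h r₁ K₁ (r₁ / K₂) (F r₁ K₁ (r₁ / K₂) X Y) =
      (Y - h r₁ K₁ (r₁ / K₂) X) * (1 + r₁ / K₂ * Y + r₂ / K₁ * X) /
        ((1 + r₁ / K₁ * X + r₁ / K₂ * Y) * (1 + r₂ / K₂ * Y + r₂ / K₁ * X)) := by
  have h_eq : ∀ Z, h r₁ K₁ (r₁ / K₂) Z = K₂ / K₁ * (K₁ - Z) := fun Z => by
    unfold h
    field_simp
  unfold F G
  rw [h_eq, h_eq]
  set D₁ := 1 + r₁ / K₁ * X + r₁ / K₂ * Y with hD₁_def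
  set D₂ := 1 + r₂ / K₂ * Y + r₂ / K₁ * X with hD₂_def
  field_simp
  rw [hD₁_def, hD₂_def]
  field_simp
  ring

lemma sign_G_sub_h_F (hr₁ : 0 < r₁) (hr₂ : 0 < r₂) (hK₁ : 0 < K₁) (hK₂ : 0 < K₂)
    (hX : 0 < X) (hY : 0 < Y) :
    SignType.sign (G r₂ K₂ (r₂ / K₁) X Y - h r₁ K₁ (r₁ / K₂) (F r₁ K₁ (r₁ / K₂) X Y)) =
      SignType.sign (Y - h r₁ K₁ (r₁ / K₂) X) := by
  have hD₁ : 0 < 1 + r₁ / K₁ * X + r₁ / K₂ * Y := by positivity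
  have hD₂ : 0 < 1 + r₂ / K₂ * Y + r₂ / K₁ * X := by positivity
  have hfactor : 0 < (1 + r₁ / K₂ * Y + r₂ / K₁ * X) /
      ((1 + r₁ / K₁ * X + r₁ / K₂ * Y) * (1 + r₂ / K₂ * Y + r₂ / K₁ * X)) := by positivity
  rw [G_sub_h_F_eq hr₁.ne' hK₁.ne' hK₂.ne' hD₁.ne' hD₂.ne', mul_div_assoc, sign_mul,
    sign_pos hfactor, mul_one]

end DegenerateCompetition

theorem stmt12_general (r₁ r₂ K₁ K₂ α₁ α₂ : ℝ)
    (hr₁ : 0 < r₁) (hr₂ : 0 < r₂) (hK₁ : 0 < K₁) (hK₂ : 0 < K₂)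
    (hc1 : r₁ / α₁ = K₂) (hc2 : r₂ / α₂ = K₁) :
    (∀ X Y : ℝ, 0 < X → 0 < Y →
        (G r₂ K₂ α₂ X Y - h r₁ K₁ α₁ (F r₁ K₁ α₁ X Y) = 0 ↔ Y = h r₁ K₁ α₁ X)) ∧
    (∀ X Y : ℝ, 0 < X → 0 < Y → Y < h r₁ K₁ α₁ X →
        G r₂ K₂ α₂ X Y - h r₁ K₁ α₁ (F r₁ K₁ α₁ X Y) < 0) ∧
    (∀ X Y : ℝ, 0 < X → 0 < Y → h r₁ K₁ α₁ X < Y →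
        0 < G r₂ K₂ α₂ X Y - h r₁ K₁ α₁ (F r₁ K₁ α₁ X Y)) := by
  obtain rfl := eq_div_of_div_eq hK₂.ne' hc1
  obtain rfl := eq_div_of_div_eq hK₁.ne' hc2
  refine ⟨fun X Y hX hY => ?_, fun X Y hX hY hlt => ?_, fun X Y hX hY hlt => ?_⟩
  all_goals have hsign := sign_G_sub_h_F hr₁ hr₂ hK₁ hK₂ hX hY
  · rw [← sign_eq_zero_iff, hsign, sign_eq_zero_iff, sub_eq_zero]
  · rw [← sign_eq_neg_one_iff, hsign, sign_eq_neg_one_iff, sub_neg]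
    exact hlt
  · rw [← sign_eq_one_iff, hsign, sign_eq_one_iff, sub_pos]
    exact hlt

theorem stmt12 (r₁ r₂ K₁ K₂ α₁ α₂ : ℝ)
    (hr₁ : 0 < r₁) (hr₂ : 0 < r₂) (hK₁ : 0 < K₁) (hK₂ : 0 < K₂)
    (hα₁ : 0 < α₁) (hα₂ : 0 < α₂)
    (hc1 : r₁ / α₁ = K₂) (hc2 : r₂ / α₂ = K₁) :
    (∀ X Y : ℝ, 0 < X → 0 < Y →
        (G r₂ K₂ α₂ X Y - h r₁ K₁ α₁ (F r₁ K₁ α₁ X Y) = 0 ↔ Y = h r₁ K₁ α₁ X)) ∧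
    (∀ X Y : ℝ, 0 < X → 0 < Y → Y < h r₁ K₁ α₁ X →
        G r₂ K₂ α₂ X Y - h r₁ K₁ α₁ (F r₁ K₁ α₁ X Y) < 0) ∧
    (∀ X Y : ℝ, 0 < X → 0 < Y → h r₁ K₁ α₁ X < Y →
        0 < G r₂ K₂ α₂ X Y - h r₁ K₁ α₁ (F r₁ K₁ α₁ X Y)) :=
  stmt12_general r₁ r₂ K₁ K₂ α₁ α₂ hr₁ hr₂ hK₁ hK₂ hc1 hc2
end

section
/- For the Leslie–Gower competition map with C₁₂ = C₂₁ = 0, both regions R₁ = {(X,Y) : X, Y > 0, Y < h(X)} and R₂ = {(X,Y) : X, Y > 0, Y > h(X)} are invariant under the map, and every point on the segment E*_X = {(X, h(X)) : 0 ≤ X ≤ K₁} is a fixed point. -/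
section LeslieGower

variable {r₁ r₂ K₁ K₂ α₁ α₂ X Y : ℝ}

theorem F_apply_h (h1r₁ : 1 + r₁ ≠ 0) (hK₁ : K₁ ≠ 0) (hα₁ : α₁ ≠ 0) :
    F r₁ K₁ α₁ X (h r₁ K₁ α₁ X) = X := by
  have hden : 1 + r₁ / K₁ * X + α₁ * h r₁ K₁ α₁ X = 1 + r₁ := by
    unfold h
    field_simp
    ring
  rw [F, hden, mul_div_cancel_left₀ X h1r₁]

theorem G_apply_k (hr₂ : r₂ ≠ 0) (h1r₂ : 1 + r₂ ≠ 0) (hK₂ : K₂ ≠ 0) :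
    G r₂ K₂ α₂ X (k r₂ K₂ α₂ X) = k r₂ K₂ α₂ X := by
  have hden : 1 + r₂ / K₂ * k r₂ K₂ α₂ X + α₂ * X = 1 + r₂ := by
    unfold k
    field_simp
    ring
  rw [G, hden, mul_div_cancel_left₀ _ h1r₂]

theorem h_eq_k (hK₁ : K₁ ≠ 0) (hc1 : r₁ / α₁ = K₂) (hc2 : r₂ / α₂ = K₁) :
    h r₁ K₁ α₁ = k r₂ K₂ α₂ := by
  have hα₂ : α₂ ≠ 0 := by
    rintro rfl
    exact hK₁ (by simpa using hc2.symm)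
  subst hc1 hc2
  funext X
  unfold h k
  field_simp

theorem h_F_sub_G (hr₁ : 0 < r₁) (hr₂ : 0 < r₂) (hK₁ : 0 < K₁) (hK₂ : 0 < K₂)
    (hα₁ : 0 < α₁) (hα₂ : 0 < α₂) (hc1 : r₁ / α₁ = K₂) (hc2 : r₂ / α₂ = K₁)
    (hX : 0 ≤ X) (hY : 0 ≤ Y) :
    h r₁ K₁ α₁ (F r₁ K₁ α₁ X Y) - G r₂ K₂ α₂ X Y =
      (h r₁ K₁ α₁ X - Y) * (1 + α₂ * X + α₁ * Y) /
        ((1 + r₁ / K₁ * X + α₁ * Y) * (1 + r₂ / K₂ * Y + α₂ * X)) := by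
  have hD₁ : 0 < 1 + r₁ / K₁ * X + α₁ * Y := by positivity
  have hD₂ : 0 < 1 + r₂ / K₂ * Y + α₂ * X := by positivity
  subst hc1 hc2
  unfold h F G
  field_simp
  ring

theorem G_lt_h_F (hr₁ : 0 < r₁) (hr₂ : 0 < r₂) (hK₁ : 0 < K₁) (hK₂ : 0 < K₂)
    (hα₁ : 0 < α₁) (hα₂ : 0 < α₂) (hc1 : r₁ / α₁ = K₂) (hc2 : r₂ / α₂ = K₁)
    (hX : 0 ≤ X) (hY : 0 ≤ Y) (hbelow : Y < h r₁ K₁ α₁ X) :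
    G r₂ K₂ α₂ X Y < h r₁ K₁ α₁ (F r₁ K₁ α₁ X Y) := by
  rw [← sub_pos, h_F_sub_G hr₁ hr₂ hK₁ hK₂ hα₁ hα₂ hc1 hc2 hX hY]
  exact div_pos (mul_pos (sub_pos.2 hbelow) (by positivity)) (by positivity)

theorem h_F_lt_G (hr₁ : 0 < r₁) (hr₂ : 0 < r₂) (hK₁ : 0 < K₁) (hK₂ : 0 < K₂)
    (hα₁ : 0 < α₁) (hα₂ : 0 < α₂) (hc1 : r₁ / α₁ = K₂) (hc2 : r₂ / α₂ = K₁)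
    (hX : 0 ≤ X) (hY : 0 ≤ Y) (habove : h r₁ K₁ α₁ X < Y) :
    h r₁ K₁ α₁ (F r₁ K₁ α₁ X Y) < G r₂ K₂ α₂ X Y := by
  rw [← sub_neg, h_F_sub_G hr₁ hr₂ hK₁ hK₂ hα₁ hα₂ hc1 hc2 hX hY]
  exact div_neg_of_neg_of_pos (mul_neg_of_neg_of_pos (sub_neg.2 habove) (by positivity))
    (by positivity)

end LeslieGower

theorem stmt13 (r₁ r₂ K₁ K₂ α₁ α₂ : ℝ)
    (hr₁ : 0 < r₁) (hr₂ : 0 < r₂) (hK₁ : 0 < K₁) (hK₂ : 0 < K₂)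
    (hα₁ : 0 < α₁) (hα₂ : 0 < α₂)
    (hc1 : r₁ / α₁ = K₂) (hc2 : r₂ / α₂ = K₁) :
    (∀ X Y : ℝ, 0 < X → 0 < Y → Y < h r₁ K₁ α₁ X →
        0 < F r₁ K₁ α₁ X Y ∧ 0 < G r₂ K₂ α₂ X Y ∧
          G r₂ K₂ α₂ X Y < h r₁ K₁ α₁ (F r₁ K₁ α₁ X Y)) ∧
    (∀ X Y : ℝ, 0 < X → 0 < Y → h r₁ K₁ α₁ X < Y →
        0 < F r₁ K₁ α₁ X Y ∧ 0 < G r₂ K₂ α₂ X Y ∧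
          h r₁ K₁ α₁ (F r₁ K₁ α₁ X Y) < G r₂ K₂ α₂ X Y) ∧
    (∀ X : ℝ, X ∈ Set.Icc 0 K₁ →
        F r₁ K₁ α₁ X (h r₁ K₁ α₁ X) = X ∧
        G r₂ K₂ α₂ X (h r₁ K₁ α₁ X) = h r₁ K₁ α₁ X) := by
  have hF_pos : ∀ X Y : ℝ, 0 < X → 0 < Y → 0 < F r₁ K₁ α₁ X Y := fun X Y hX hY => by
    unfold F; positivity
  have hG_pos : ∀ X Y : ℝ, 0 < X → 0 < Y → 0 < G r₂ K₂ α₂ X Y := fun X Y hX hY => by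
    unfold G; positivity
  refine ⟨fun X Y hX hY hbelow => ⟨hF_pos X Y hX hY, hG_pos X Y hX hY, ?_⟩,
    fun X Y hX hY habove => ⟨hF_pos X Y hX hY, hG_pos X Y hX hY, ?_⟩,
    fun X _ => ⟨F_apply_h (by positivity) hK₁.ne' hα₁.ne', ?_⟩⟩
  · exact G_lt_h_F hr₁ hr₂ hK₁ hK₂ hα₁ hα₂ hc1 hc2 hX.le hY.le hbelow
  · exact h_F_lt_G hr₁ hr₂ hK₁ hK₂ hα₁ hα₂ hc1 hc2 hX.le hY.le habove
  · rw [h_eq_k hK₁.ne' hc1 hc2]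
    exact G_apply_k hr₂.ne' (by positivity) hK₂.ne'
end

section
/- For the Leslie–Gower competition map with C₁₂ = C₂₁ = 0, every equilibrium (X̂, Ŷ) on the segment E*_X = {(X, h(X)) : 0 ≤ X ≤ K₁} is Lyapunov stable, and every orbit with (X₀, Y₀) ≠ (0,0), X₀, Y₀ ≥ 0 converges to some point of E*_X. -/
/-!
In the coordinates `u = X / K₁`, `v = Y / K₂` the relations `r₁ / α₁ = K₂`, `r₂ / α₂ = K₁` turn
the map into `u ↦ (1 + r₁) u / (1 + r₁ s)`, `v ↦ (1 + r₂) v / (1 + r₂ s)` with `s = u + v`, and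
the segment of equilibria becomes `s = 1`. Each new coordinate is a convex combination of the old
deviations from a point of that line, so the sup distance to every equilibrium never increases
(stability). Moreover both coordinates grow while `s ≤ 1` and shrink while `s ≥ 1`, and neither
half-plane is ever left; hence every orbit is monotone and bounded, and its limit is a nonzero
fixed point, i.e. a point with `s = 1`.
-/

open Filter Topology

lemma Prod.tendsto_atTop_ciSup {ι α β : Type*} [Preorder ι] [ConditionallyCompleteLattice α]
    [TopologicalSpace α] [SupConvergenceClass α] [ConditionallyCompleteLattice β]
    [TopologicalSpace β] [SupConvergenceClass β] {f : ι → α × β} (hf : Monotone f)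
    (hb : BddAbove (Set.range f)) : Tendsto f atTop (𝓝 (⨆ i, (f i).1, ⨆ i, (f i).2)) :=
  (_root_.tendsto_atTop_ciSup (monotone_fst.comp hf)
      (Set.range_comp .. ▸ monotone_fst.map_bddAbove hb)).prodMk_nhds
    (_root_.tendsto_atTop_ciSup (monotone_snd.comp hf)
      (Set.range_comp .. ▸ monotone_snd.map_bddAbove hb))

lemma Prod.tendsto_atTop_ciInf {ι α β : Type*} [Preorder ι] [ConditionallyCompleteLattice α]
    [TopologicalSpace α] [InfConvergenceClass α] [ConditionallyCompleteLattice β]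
    [TopologicalSpace β] [InfConvergenceClass β] {f : ι → α × β} (hf : Antitone f)
    (hb : BddBelow (Set.range f)) : Tendsto f atTop (𝓝 (⨅ i, (f i).1, ⨅ i, (f i).2)) :=
  (_root_.tendsto_atTop_ciInf (monotone_fst.comp_antitone hf)
      (Set.range_comp .. ▸ monotone_fst.map_bddBelow hb)).prodMk_nhds
    (_root_.tendsto_atTop_ciInf (monotone_snd.comp_antitone hf)
      (Set.range_comp .. ▸ monotone_snd.map_bddBelow hb))

namespace LeslieGower

section Growth

variable {r r₁ r₂ u v x y s : ℝ}

lemma le_growth (hr : 0 ≤ r) (hu : 0 ≤ u) (hs₀ : 0 ≤ s) (hs : s ≤ 1) :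
    u ≤ (1 + r) * u / (1 + r * s) := by
  rw [le_div_iff₀ (by positivity)]
  nlinarith [mul_nonneg (mul_nonneg hr hu) (sub_nonneg.2 hs)]

lemma growth_le (hr : 0 ≤ r) (hu : 0 ≤ u) (hs : 1 ≤ s) :
    (1 + r) * u / (1 + r * s) ≤ u := by
  rw [div_le_iff₀ (by nlinarith)]
  nlinarith [mul_nonneg (mul_nonneg hr hu) (sub_nonneg.2 hs)]

lemma growth_add_growth_le_one (hr₁ : 0 ≤ r₁) (hr₂ : 0 ≤ r₂) (hu : 0 ≤ u) (hv : 0 ≤ v)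
    (hs : u + v ≤ 1) :
    (1 + r₁) * u / (1 + r₁ * (u + v)) + (1 + r₂) * v / (1 + r₂ * (u + v)) ≤ 1 := by
  rw [div_add_div _ _ (by positivity) (by positivity), div_le_one (by positivity)]
  nlinarith [mul_nonneg (sub_nonneg.2 hs) (by positivity : 0 ≤ r₁ * v + r₂ * u), sub_nonneg.2 hs]

lemma one_le_growth_add_growth (hr₁ : 0 ≤ r₁) (hr₂ : 0 ≤ r₂) (hu : 0 ≤ u) (hv : 0 ≤ v)
    (hs : 1 ≤ u + v) :
    1 ≤ (1 + r₁) * u / (1 + r₁ * (u + v)) + (1 + r₂) * v / (1 + r₂ * (u + v)) := by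
  rw [div_add_div _ _ (by positivity) (by positivity), le_div_iff₀ (by positivity)]
  nlinarith [mul_nonneg (sub_nonneg.2 hs) (by positivity : 0 ≤ r₁ * v + r₂ * u), sub_nonneg.2 hs]

lemma abs_convexComb_le_max {a z w : ℝ} (ha₀ : 0 ≤ a) (ha₁ : a ≤ 1) :
    |(1 - a) * z + a * w| ≤ max |z| |w| :=
  calc |(1 - a) * z + a * w| ≤ (1 - a) * |z| + a * |w| := by
        refine (abs_add_le _ _).trans_eq ?_
        rw [abs_mul, abs_mul, abs_of_nonneg (sub_nonneg.2 ha₁), abs_of_nonneg ha₀]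
    _ ≤ (1 - a) * max |z| |w| + a * max |z| |w| := by
        gcongr
        · exact le_max_left _ _
        · exact le_max_right _ _
    _ = max |z| |w| := by ring

/-- On the line `x + y = 1` the new deviation is the convex combination
`(1 - a) (u - x) + a (y - v)` with `a = r u / (1 + r (u + v))`. -/
lemma abs_growth_sub_le (hr : 0 ≤ r) (hu : 0 ≤ u) (hv : 0 ≤ v) (hxy : x + y = 1) :
    |(1 + r) * u / (1 + r * (u + v)) - x| ≤ max |u - x| |v - y| := by
  have hD : 0 < 1 + r * (u + v) := by positivity
  set a := r * u / (1 + r * (u + v))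
  have ha₀ : 0 ≤ a := by positivity
  have ha₁ : a ≤ 1 := by rw [div_le_one hD]; nlinarith
  have key : (1 + r) * u / (1 + r * (u + v)) - x = (1 - a) * (u - x) + a * (y - v) := by
    simp only [a]; field_simp; linear_combination (-(r * u)) * hxy
  rw [key, abs_sub_comm v y]
  exact abs_convexComb_le_max ha₀ ha₁

end Growth

/-- The map `T` in the coordinates `(X / K₁, Y / K₂)`: under `r₁ / α₁ = K₂` and `r₂ / α₂ = K₁`
both denominators depend only on the total `X / K₁ + Y / K₂`. -/
noncomputable def normalizedMap (r₁ r₂ : ℝ) (q : ℝ × ℝ) : ℝ × ℝ :=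
  ((1 + r₁) * q.1 / (1 + r₁ * (q.1 + q.2)), (1 + r₂) * q.2 / (1 + r₂ * (q.1 + q.2)))

section NormalizedMap

variable {r₁ r₂ : ℝ} {q e : ℝ × ℝ}

local notation "N" => normalizedMap r₁ r₂

lemma normalizedMap_nonneg (hr₁ : 0 ≤ r₁) (hr₂ : 0 ≤ r₂) (hq : 0 ≤ q) : 0 ≤ N q := by
  obtain ⟨hq₁, hq₂⟩ : 0 ≤ q.1 ∧ 0 ≤ q.2 := hq
  exact ⟨by simp only [normalizedMap]; positivity, by simp only [normalizedMap]; positivity⟩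

lemma mapsTo_normalizedMap_sum_le_one (hr₁ : 0 ≤ r₁) (hr₂ : 0 ≤ r₂) :
    Set.MapsTo N {q | 0 ≤ q ∧ q.1 + q.2 ≤ 1} {q | 0 ≤ q ∧ q.1 + q.2 ≤ 1} :=
  fun _ ⟨hq, hs⟩ => ⟨normalizedMap_nonneg hr₁ hr₂ hq,
    growth_add_growth_le_one hr₁ hr₂ hq.1 hq.2 hs⟩

lemma mapsTo_normalizedMap_one_le_sum (hr₁ : 0 ≤ r₁) (hr₂ : 0 ≤ r₂) :
    Set.MapsTo N {q | 0 ≤ q ∧ 1 ≤ q.1 + q.2} {q | 0 ≤ q ∧ 1 ≤ q.1 + q.2} :=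
  fun _ ⟨hq, hs⟩ => ⟨normalizedMap_nonneg hr₁ hr₂ hq,
    one_le_growth_add_growth hr₁ hr₂ hq.1 hq.2 hs⟩

lemma le_normalizedMap (hr₁ : 0 ≤ r₁) (hr₂ : 0 ≤ r₂) (hq : 0 ≤ q) (hs : q.1 + q.2 ≤ 1) :
    q ≤ N q :=
  ⟨le_growth hr₁ hq.1 (add_nonneg hq.1 hq.2) hs, le_growth hr₂ hq.2 (add_nonneg hq.1 hq.2) hs⟩

lemma normalizedMap_le (hr₁ : 0 ≤ r₁) (hr₂ : 0 ≤ r₂) (hq : 0 ≤ q) (hs : 1 ≤ q.1 + q.2) :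
    N q ≤ q :=
  ⟨growth_le hr₁ hq.1 hs, growth_le hr₂ hq.2 hs⟩

lemma dist_normalizedMap_le (hr₁ : 0 ≤ r₁) (hr₂ : 0 ≤ r₂) (hq : 0 ≤ q) (he : e.1 + e.2 = 1) :
    dist (N q) e ≤ dist q e := by
  simp only [Prod.dist_eq, Real.dist_eq]
  refine max_le (abs_growth_sub_le hr₁ hq.1 hq.2 he) ?_
  rw [max_comm]
  show |(1 + r₂) * q.2 / (1 + r₂ * (q.1 + q.2)) - e.2| ≤ _
  rw [add_comm q.1]
  exact abs_growth_sub_le hr₂ hq.2 hq.1 (by rw [add_comm, he])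

lemma dist_iterate_normalizedMap_le (hr₁ : 0 ≤ r₁) (hr₂ : 0 ≤ r₂) (hq : 0 ≤ q)
    (he : e.1 + e.2 = 1) (t : ℕ) : dist (N^[t] q) e ≤ dist q e := by
  induction t generalizing q with
  | zero => rfl
  | succ t ih =>
    rw [Function.iterate_succ_apply]
    exact (ih (normalizedMap_nonneg hr₁ hr₂ hq)).trans (dist_normalizedMap_le hr₁ hr₂ hq he)

lemma continuousAt_normalizedMap (hr₁ : 0 ≤ r₁) (hr₂ : 0 ≤ r₂) (he : 0 ≤ e) :
    ContinuousAt N e := by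
  have hs : 0 ≤ e.1 + e.2 := add_nonneg he.1 he.2
  unfold normalizedMap
  exact ((continuousAt_const.mul continuousAt_fst).div (by fun_prop) (by positivity)).prodMk
    ((continuousAt_const.mul continuousAt_snd).div (by fun_prop) (by positivity))

lemma sum_eq_one_of_isFixedPt (hr₁ : 0 < r₁) (hr₂ : 0 < r₂) (he : 0 ≤ e) (he₀ : e ≠ 0)
    (hfix : Function.IsFixedPt N e) : e.1 + e.2 = 1 := by
  obtain ⟨he₁, he₂⟩ : 0 ≤ e.1 ∧ 0 ≤ e.2 := he
  by_contra hs
  have hs' : 1 - (e.1 + e.2) ≠ 0 := sub_ne_zero.2 (Ne.symm hs)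
  have hfix₁ := congrArg Prod.fst hfix
  have hfix₂ := congrArg Prod.snd hfix
  simp only [normalizedMap] at hfix₁ hfix₂
  rw [div_eq_iff (by positivity)] at hfix₁ hfix₂
  have h₁ : r₁ * (1 - (e.1 + e.2)) * e.1 = 0 := by linear_combination hfix₁
  have h₂ : r₂ * (1 - (e.1 + e.2)) * e.2 = 0 := by linear_combination hfix₂
  simp only [mul_eq_zero, hr₁.ne', hr₂.ne', hs', false_or] at h₁ h₂
  exact he₀ (Prod.ext h₁ h₂)

lemma tendsto_iterate_normalizedMap_of_sum_le_one (hr₁ : 0 ≤ r₁) (hr₂ : 0 ≤ r₂) (hq : 0 ≤ q)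
    (hq₀ : q ≠ 0) (hs : q.1 + q.2 ≤ 1) :
    ∃ e, 0 ≤ e ∧ e ≠ 0 ∧ Tendsto (fun t => N^[t] q) atTop (𝓝 e) := by
  have horbit := fun t => (mapsTo_normalizedMap_sum_le_one hr₁ hr₂).iterate t ⟨hq, hs⟩
  have hmono : Monotone (fun t => N^[t] q) := monotone_nat_of_le_succ fun t => by
    rw [Function.iterate_succ_apply']
    exact le_normalizedMap hr₁ hr₂ (horbit t).1 (horbit t).2
  have hbdd : BddAbove (Set.range fun t => N^[t] q) := by
    refine ⟨1, ?_⟩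
    rintro _ ⟨t, rfl⟩
    obtain ⟨⟨h₁, h₂⟩, hs⟩ : (0 ≤ (N^[t] q).1 ∧ 0 ≤ (N^[t] q).2) ∧ _ := horbit t
    exact ⟨by simp only [Prod.fst_one]; linarith, by simp only [Prod.snd_one]; linarith⟩
  have hlim := Prod.tendsto_atTop_ciSup hmono hbdd
  have hq_le := hmono.ge_of_tendsto hlim 0
  exact ⟨_, hq.trans hq_le, fun he => hq₀ (le_antisymm (he ▸ hq_le) hq), hlim⟩

lemma tendsto_iterate_normalizedMap_of_one_le_sum (hr₁ : 0 ≤ r₁) (hr₂ : 0 ≤ r₂) (hq : 0 ≤ q)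
    (hs : 1 ≤ q.1 + q.2) :
    ∃ e, 0 ≤ e ∧ e ≠ 0 ∧ Tendsto (fun t => N^[t] q) atTop (𝓝 e) := by
  have horbit := fun t => (mapsTo_normalizedMap_one_le_sum hr₁ hr₂).iterate t ⟨hq, hs⟩
  have hanti : Antitone (fun t => N^[t] q) := antitone_nat_of_succ_le fun t => by
    rw [Function.iterate_succ_apply']
    exact normalizedMap_le hr₁ hr₂ (horbit t).1 (horbit t).2
  have hbdd : BddBelow (Set.range fun t => N^[t] q) := ⟨0, by rintro _ ⟨t, rfl⟩; exact (horbit t).1⟩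
  have hlim := Prod.tendsto_atTop_ciInf hanti hbdd
  have hsum := ge_of_tendsto' (hlim.fst_nhds.add hlim.snd_nhds) fun t => (horbit t).2
  refine ⟨_, ge_of_tendsto' hlim fun t => (horbit t).1, fun he => ?_, hlim⟩
  rw [he, Prod.fst_zero, Prod.snd_zero] at hsum
  norm_num at hsum

lemma exists_tendsto_iterate_normalizedMap (hr₁ : 0 < r₁) (hr₂ : 0 < r₂) (hq : 0 ≤ q)
    (hq₀ : q ≠ 0) :
    ∃ e, 0 ≤ e ∧ e.1 + e.2 = 1 ∧ Tendsto (fun t => N^[t] q) atTop (𝓝 e) := by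
  obtain ⟨e, he, he₀, hlim⟩ : ∃ e, 0 ≤ e ∧ e ≠ 0 ∧ Tendsto (fun t => N^[t] q) atTop (𝓝 e) := by
    rcases le_total (q.1 + q.2) 1 with hs | hs
    · exact tendsto_iterate_normalizedMap_of_sum_le_one hr₁.le hr₂.le hq hq₀ hs
    · exact tendsto_iterate_normalizedMap_of_one_le_sum hr₁.le hr₂.le hq hs
  exact ⟨e, he, sum_eq_one_of_isFixedPt hr₁ hr₂ he he₀ (isFixedPt_of_tendsto_iterate hlim
    (continuousAt_normalizedMap hr₁.le hr₂.le he)), hlim⟩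

end NormalizedMap

noncomputable def scale (K₁ K₂ : ℝ) (q : ℝ × ℝ) : ℝ × ℝ := (K₁ * q.1, K₂ * q.2)

section Scale

variable {K₁ K₂ : ℝ}

lemma continuous_scale : Continuous (scale K₁ K₂) := by unfold scale; fun_prop

lemma scale_div (hK₁ : K₁ ≠ 0) (hK₂ : K₂ ≠ 0) (p : ℝ × ℝ) : scale K₁ K₂ (p.1 / K₁, p.2 / K₂) = p :=
  Prod.ext (mul_div_cancel₀ _ hK₁) (mul_div_cancel₀ _ hK₂)

lemma dist_scale (hK₁ : 0 ≤ K₁) (hK₂ : 0 ≤ K₂) (a b : ℝ × ℝ) :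
    dist (scale K₁ K₂ a) (scale K₁ K₂ b) = max (K₁ * |a.1 - b.1|) (K₂ * |a.2 - b.2|) := by
  simp only [scale, Prod.dist_eq, Real.dist_eq, ← mul_sub, abs_mul, abs_of_nonneg hK₁,
    abs_of_nonneg hK₂]

lemma dist_scale_le (hK₁ : 0 ≤ K₁) (hK₂ : 0 ≤ K₂) (a b : ℝ × ℝ) :
    dist (scale K₁ K₂ a) (scale K₁ K₂ b) ≤ max K₁ K₂ * dist a b := by
  rw [dist_scale hK₁ hK₂, Prod.dist_eq, Real.dist_eq, Real.dist_eq]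
  exact max_le (mul_le_mul (le_max_left _ _) (le_max_left _ _) (abs_nonneg _) (by positivity))
    (mul_le_mul (le_max_right _ _) (le_max_right _ _) (abs_nonneg _) (by positivity))

lemma min_mul_dist_le_dist_scale (hK₁ : 0 ≤ K₁) (hK₂ : 0 ≤ K₂) (a b : ℝ × ℝ) :
    min K₁ K₂ * dist a b ≤ dist (scale K₁ K₂ a) (scale K₁ K₂ b) := by
  rw [dist_scale hK₁ hK₂, Prod.dist_eq, Real.dist_eq, Real.dist_eq, mul_max_of_nonneg _ _
    (le_min hK₁ hK₂)]
  exact max_le_max (mul_le_mul_of_nonneg_right (min_le_left _ _) (abs_nonneg _))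
    (mul_le_mul_of_nonneg_right (min_le_right _ _) (abs_nonneg _))

variable {r₁ r₂ α₁ α₂ : ℝ}

lemma semiconj_scale (hK₁ : K₁ ≠ 0) (hK₂ : K₂ ≠ 0) (hrα₁ : r₁ = K₂ * α₁) (hrα₂ : r₂ = K₁ * α₂) :
    Function.Semiconj (scale K₁ K₂) (normalizedMap r₁ r₂) (T r₁ r₂ K₁ K₂ α₁ α₂) := by
  intro q
  have h₁ : 1 + r₁ / K₁ * (K₁ * q.1) + α₁ * (K₂ * q.2) = 1 + r₁ * (q.1 + q.2) := by
    rw [hrα₁]; field_simp; ring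
  have h₂ : 1 + r₂ / K₂ * (K₂ * q.2) + α₂ * (K₁ * q.1) = 1 + r₂ * (q.1 + q.2) := by
    rw [hrα₂]; field_simp; ring
  simp only [scale, normalizedMap, T, F, G, h₁, h₂, Prod.mk.injEq]
  constructor <;> ring

lemma scale_mk_one_sub (hK₁ : K₁ ≠ 0) (hα₁ : α₁ ≠ 0) (hrα₁ : r₁ = K₂ * α₁) (u : ℝ) :
    scale K₁ K₂ (u, 1 - u) = (K₁ * u, h r₁ K₁ α₁ (K₁ * u)) := by
  simp only [scale, h, hrα₁, Prod.mk.injEq, true_and]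
  field_simp

end Scale

section Orbits

variable {r₁ r₂ K₁ K₂ α₁ α₂ : ℝ}

lemma dist_iterate_T_le (hr₁ : 0 ≤ r₁) (hr₂ : 0 ≤ r₂) (hK₁ : 0 < K₁) (hK₂ : 0 < K₂)
    (hrα₁ : r₁ = K₂ * α₁) (hrα₂ : r₂ = K₁ * α₂) {p : ℝ × ℝ} (hp : 0 ≤ p) (u : ℝ) (t : ℕ) :
    dist ((T r₁ r₂ K₁ K₂ α₁ α₂)^[t] p) (scale K₁ K₂ (u, 1 - u)) ≤
      max K₁ K₂ / min K₁ K₂ * dist p (scale K₁ K₂ (u, 1 - u)) := by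
  set q : ℝ × ℝ := (p.1 / K₁, p.2 / K₂)
  have hq : 0 ≤ q := ⟨div_nonneg hp.1 hK₁.le, div_nonneg hp.2 hK₂.le⟩
  have hpq : p = scale K₁ K₂ q := (scale_div hK₁.ne' hK₂.ne' p).symm
  have hmin : 0 < min K₁ K₂ := lt_min hK₁ hK₂
  rw [hpq, ← (semiconj_scale hK₁.ne' hK₂.ne' hrα₁ hrα₂).iterate_right t q, div_mul_eq_mul_div,
    le_div_iff₀' hmin]
  calc min K₁ K₂ * dist (scale K₁ K₂ ((normalizedMap r₁ r₂)^[t] q)) (scale K₁ K₂ (u, 1 - u))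
      ≤ min K₁ K₂ * (max K₁ K₂ * dist q (u, 1 - u)) := by
        gcongr
        exact (dist_scale_le hK₁.le hK₂.le _ _).trans (mul_le_mul_of_nonneg_left
          (dist_iterate_normalizedMap_le hr₁ hr₂ hq (add_sub_cancel _ _) t) (by positivity))
    _ = max K₁ K₂ * (min K₁ K₂ * dist q (u, 1 - u)) := by ring
    _ ≤ max K₁ K₂ * dist (scale K₁ K₂ q) (scale K₁ K₂ (u, 1 - u)) := by
        gcongr
        exact min_mul_dist_le_dist_scale hK₁.le hK₂.le _ _

lemma exists_tendsto_iterate_T (hr₁ : 0 < r₁) (hr₂ : 0 < r₂) (hK₁ : 0 < K₁) (hK₂ : 0 < K₂)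
    (hrα₁ : r₁ = K₂ * α₁) (hrα₂ : r₂ = K₁ * α₂) {p : ℝ × ℝ} (hp : 0 ≤ p) (hp₀ : p ≠ 0) :
    ∃ u ∈ Set.Icc (0 : ℝ) 1, Tendsto (fun t => (T r₁ r₂ K₁ K₂ α₁ α₂)^[t] p) atTop
      (𝓝 (scale K₁ K₂ (u, 1 - u))) := by
  set q : ℝ × ℝ := (p.1 / K₁, p.2 / K₂)
  have hq : 0 ≤ q := ⟨div_nonneg hp.1 hK₁.le, div_nonneg hp.2 hK₂.le⟩
  have hpq : p = scale K₁ K₂ q := (scale_div hK₁.ne' hK₂.ne' p).symm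
  have hq₀ : q ≠ 0 := by rintro hq₀; exact hp₀ (by rw [hpq, hq₀]; simp [scale])
  obtain ⟨e, he, hsum, hlim⟩ := exists_tendsto_iterate_normalizedMap hr₁ hr₂ hq hq₀
  obtain ⟨he₁, he₂⟩ : 0 ≤ e.1 ∧ 0 ≤ e.2 := he
  refine ⟨e.1, ⟨he₁, by linarith⟩, ?_⟩
  rw [← eq_sub_of_add_eq' hsum, hpq]
  exact ((continuous_scale.tendsto e).comp hlim).congr
    ((semiconj_scale hK₁.ne' hK₂.ne' hrα₁ hrα₂).iterate_right · q)

end Orbits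

end LeslieGower

open LeslieGower in
theorem stmt14 (r₁ r₂ K₁ K₂ α₁ α₂ : ℝ)
    (hr₁ : 0 < r₁) (hr₂ : 0 < r₂) (hK₁ : 0 < K₁) (hK₂ : 0 < K₂)
    (hα₁ : 0 < α₁) (hα₂ : 0 < α₂)
    (hc1 : r₁ / α₁ = K₂) (hc2 : r₂ / α₂ = K₁) :
    (∀ Xhat ∈ Set.Icc (0 : ℝ) K₁, ∀ ε > (0 : ℝ), ∃ δ > (0 : ℝ),
        ∀ p : ℝ × ℝ, 0 ≤ p.1 → 0 ≤ p.2 →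
          dist p (Xhat, h r₁ K₁ α₁ Xhat) < δ →
          ∀ t : ℕ, dist ((T r₁ r₂ K₁ K₂ α₁ α₂)^[t] p) (Xhat, h r₁ K₁ α₁ Xhat) < ε) ∧
    (∀ p : ℝ × ℝ, 0 ≤ p.1 → 0 ≤ p.2 → p ≠ (0, 0) →
        ∃ Xhat ∈ Set.Icc (0 : ℝ) K₁,
          Filter.Tendsto (fun t => (T r₁ r₂ K₁ K₂ α₁ α₂)^[t] p) Filter.atTop
            (nhds (Xhat, h r₁ K₁ α₁ Xhat))) := by
  have hrα₁ : r₁ = K₂ * α₁ := (div_eq_iff hα₁.ne').1 hc1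
  have hrα₂ : r₂ = K₁ * α₂ := (div_eq_iff hα₂.ne').1 hc2
  have hequil : ∀ X, (X, h r₁ K₁ α₁ X) = scale K₁ K₂ (X / K₁, 1 - X / K₁) := fun X => by
    rw [scale_mk_one_sub hK₁.ne' hα₁.ne' hrα₁, mul_div_cancel₀ _ hK₁.ne']
  refine ⟨fun X _ ε hε => ?_, fun p hp₁ hp₂ hp₀ => ?_⟩
  · have hC : 0 < max K₁ K₂ / min K₁ K₂ := by positivity
    refine ⟨ε / (max K₁ K₂ / min K₁ K₂), by positivity, fun p hp₁ hp₂ hδ t => ?_⟩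
    rw [hequil] at hδ ⊢
    calc _ ≤ max K₁ K₂ / min K₁ K₂ * dist p (scale K₁ K₂ (X / K₁, 1 - X / K₁)) :=
          dist_iterate_T_le hr₁.le hr₂.le hK₁ hK₂ hrα₁ hrα₂ ⟨hp₁, hp₂⟩ _ t
      _ < ε := by rwa [lt_div_iff₀' hC] at hδ
  · obtain ⟨u, ⟨hu₀, hu₁⟩, hlim⟩ :=
      exists_tendsto_iterate_T hr₁ hr₂ hK₁ hK₂ hrα₁ hrα₂ ⟨hp₁, hp₂⟩ hp₀
    refine ⟨K₁ * u, ⟨by positivity, mul_le_of_le_one_right hK₁.le hu₁⟩, ?_⟩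
    rwa [← scale_mk_one_sub hK₁.ne' hα₁.ne' hrα₁]
end

section
/- For the Leslie–Gower competition map with C₁₂ · C₂₁ > 0, if (X̄, Ȳ) lies in both root-sets S_h and S_k and satisfies 0 < X̄ ≤ X*, 0 < Ȳ ≤ Y* (or X̄ ≥ X*, Ȳ ≥ Y*), then (X̄, Ȳ) = E* = (X*, Y*), the unique coexistence equilibrium. -/
/-! The conditions `G = h ∘ F` and `G = k ∘ F` force `F(X̄, Ȳ)` onto the intersection of the two
nullclines, so `T(X̄, Ȳ) = E*`. Clearing denominators in `F(X, Y) = X*`, `G(X, Y) = Y*` and using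
that `E*` lies on both nullclines leaves a homogeneous linear system in `(X - X*, Y - Y*)` whose
determinant is `1 + α₁ Y* + α₂ X* > 0`, so `E*` is its own only preimage under `T`. -/

theorem div_pos_of_sub_mul_sub_pos {a b c d : ℝ} (hb : 0 < b) (hc : 0 < c)
    (h : 0 < (a - c) * (b - d)) : 0 < (a - c) / (a * b - c * d) := by
  rcases mul_pos_iff.mp h with ⟨hac, hbd⟩ | ⟨hac, hbd⟩
  · exact div_pos hac (by nlinarith)
  · exact div_pos_of_neg_of_neg hac (by nlinarith)

-- Both sides say `r * y + α * K * x = r * K`.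
theorem k_eq_iff_h_eq {r K α x y : ℝ} (hr : r ≠ 0) (hK : K ≠ 0) (hα : α ≠ 0) :
    k r K α x = y ↔ h r K α y = x := by
  unfold h k
  constructor <;> intro hxy <;> field_simp at hxy ⊢ <;> linear_combination hxy

theorem G_eq_F_swap (r K α X Y : ℝ) : G r K α X Y = F r K α Y X := rfl

theorem sub_mul_eq_of_F_eq {r K α X Y Xs Ys : ℝ} (hK : K ≠ 0) (hα : α ≠ 0) (hXs : Xs ≠ 0)
    (hh : h r K α Xs = Ys) (hF : F r K α X Y = Xs) :
    (1 + α * Ys) * (X - Xs) = α * Xs * (Y - Ys) := by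
  unfold F at hF
  have hden : 1 + r / K * X + α * Y ≠ 0 := by
    rintro h0
    rw [h0, div_zero] at hF
    exact hXs hF.symm
  unfold h at hh
  rw [div_eq_iff hden] at hF
  field_simp at hh hF
  apply mul_left_cancel₀ hK
  linear_combination hF - X * hh

section Equilibrium

variable {r₁ r₂ K₁ K₂ α₁ α₂ : ℝ}

theorem coexistence_pos (hr₁ : 0 < r₁) (hr₂ : 0 < r₂) (hK₁ : 0 < K₁) (hK₂ : 0 < K₂)
    (hα₁ : 0 < α₁) (hα₂ : 0 < α₂) (hC : (r₁ / α₁ - K₂) * (r₂ / α₂ - K₁) > 0) :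
    0 < r₂ * K₁ * (α₁ * K₂ - r₁) / (α₁ * α₂ * K₁ * K₂ - r₁ * r₂) ∧
      0 < r₁ * K₂ * (α₂ * K₁ - r₂) / (α₁ * α₂ * K₁ * K₂ - r₁ * r₂) := by
  have hsign : 0 < (α₁ * K₂ - r₁) * (α₂ * K₁ - r₂) := by
    have : (r₁ / α₁ - K₂) * (r₂ / α₂ - K₁) * (α₁ * α₂) = (α₁ * K₂ - r₁) * (α₂ * K₁ - r₂) := by
      field_simp
      ring
    rw [← this]
    positivity
  have h₁ := div_pos_of_sub_mul_sub_pos (by positivity) hr₁ hsign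
  have h₂ := div_pos_of_sub_mul_sub_pos (a := α₂ * K₁) (b := α₁ * K₂) (c := r₂) (d := r₁)
    (by positivity) hr₂ (by rwa [mul_comm] at hsign)
  constructor
  · rw [show α₁ * α₂ * K₁ * K₂ - r₁ * r₂ = α₁ * K₂ * (α₂ * K₁) - r₁ * r₂ by ring, mul_div_assoc]
    exact mul_pos (mul_pos hr₂ hK₁) h₁
  · rw [show α₁ * α₂ * K₁ * K₂ - r₁ * r₂ = α₂ * K₁ * (α₁ * K₂) - r₂ * r₁ by ring, mul_div_assoc]
    exact mul_pos (mul_pos hr₁ hK₂) h₂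

theorem h_coexistence (hK₁ : K₁ ≠ 0) (hα₁ : α₁ ≠ 0) (hD : α₁ * α₂ * K₁ * K₂ - r₁ * r₂ ≠ 0) :
    h r₁ K₁ α₁ (r₂ * K₁ * (α₁ * K₂ - r₁) / (α₁ * α₂ * K₁ * K₂ - r₁ * r₂)) =
      r₁ * K₂ * (α₂ * K₁ - r₂) / (α₁ * α₂ * K₁ * K₂ - r₁ * r₂) := by
  unfold h
  generalize hDdef : α₁ * α₂ * K₁ * K₂ - r₁ * r₂ = D at hD
  field_simp
  rw [← hDdef]
  ring

theorem k_coexistence (hr₂ : r₂ ≠ 0) (hD : α₁ * α₂ * K₁ * K₂ - r₁ * r₂ ≠ 0) :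
    k r₂ K₂ α₂ (r₂ * K₁ * (α₁ * K₂ - r₁) / (α₁ * α₂ * K₁ * K₂ - r₁ * r₂)) =
      r₁ * K₂ * (α₂ * K₁ - r₂) / (α₁ * α₂ * K₁ * K₂ - r₁ * r₂) := by
  unfold k
  generalize hDdef : α₁ * α₂ * K₁ * K₂ - r₁ * r₂ = D at hD
  field_simp
  rw [← hDdef]
  ring

theorem eq_of_h_eq_k {Xs Ys x : ℝ} (hK₁ : K₁ ≠ 0) (hα₁ : α₁ ≠ 0) (hr₂ : r₂ ≠ 0)
    (hD : α₁ * α₂ * K₁ * K₂ - r₁ * r₂ ≠ 0)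
    (hh : h r₁ K₁ α₁ Xs = Ys) (hk : k r₂ K₂ α₂ Xs = Ys) (hx : h r₁ K₁ α₁ x = k r₂ K₂ α₂ x) :
    x = Xs := by
  have : (x - Xs) * (α₁ * α₂ * K₁ * K₂ - r₁ * r₂) = 0 := by
    unfold h at hh hx
    unfold k at hk hx
    field_simp at hh hk hx
    linear_combination hx - r₂ * hh + α₁ * K₁ * hk
  linarith [(mul_eq_zero.mp this).resolve_right hD]

theorem eq_of_T_eq_coexistence {Xs Ys : ℝ} {p : ℝ × ℝ}
    (hK₁ : K₁ ≠ 0) (hK₂ : K₂ ≠ 0) (hα₁ : 0 < α₁) (hα₂ : 0 < α₂) (hXs : 0 < Xs) (hYs : 0 < Ys)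
    (hh₁ : h r₁ K₁ α₁ Xs = Ys) (hh₂ : h r₂ K₂ α₂ Ys = Xs)
    (hT : T r₁ r₂ K₁ K₂ α₁ α₂ p = (Xs, Ys)) : p = (Xs, Ys) := by
  obtain ⟨hF, hG⟩ := Prod.ext_iff.mp hT
  have hu := sub_mul_eq_of_F_eq hK₁ hα₁.ne' hXs.ne' hh₁ hF
  have hv := sub_mul_eq_of_F_eq hK₂ hα₂.ne' hYs.ne' hh₂ ((G_eq_F_swap _ _ _ _ _).symm.trans hG)
  have hdet : 0 < 1 + α₁ * Ys + α₂ * Xs := by positivity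
  have hX : (1 + α₁ * Ys + α₂ * Xs) * (p.1 - Xs) = 0 := by
    linear_combination (1 + α₂ * Xs) * hu + α₁ * Xs * hv
  have hX' : p.1 = Xs := by linarith [(mul_eq_zero.mp hX).resolve_left hdet.ne']
  have hY : (1 + α₁ * Ys + α₂ * Xs) * (p.2 - Ys) = 0 := by
    linear_combination (1 + α₁ * Ys) * hv + α₂ * Ys * hu
  have hY' : p.2 = Ys := by linarith [(mul_eq_zero.mp hY).resolve_left hdet.ne']
  exact Prod.ext hX' hY'

end Equilibrium

theorem stmt15_general (r₁ r₂ K₁ K₂ α₁ α₂ : ℝ)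
    (hr₁ : 0 < r₁) (hr₂ : 0 < r₂) (hK₁ : 0 < K₁) (hK₂ : 0 < K₂)
    (hα₁ : 0 < α₁) (hα₂ : 0 < α₂)
    (hC : (r₁ / α₁ - K₂) * (r₂ / α₂ - K₁) > 0)
    (Xs Ys : ℝ)
    (hXs : Xs = r₂ * K₁ * (α₁ * K₂ - r₁) / (α₁ * α₂ * K₁ * K₂ - r₁ * r₂))
    (hYs : Ys = r₁ * K₂ * (α₂ * K₁ - r₂) / (α₁ * α₂ * K₁ * K₂ - r₁ * r₂))
    (Xbar Ybar : ℝ)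
    (hSh : G r₂ K₂ α₂ Xbar Ybar - h r₁ K₁ α₁ (F r₁ K₁ α₁ Xbar Ybar) = 0)
    (hSk : G r₂ K₂ α₂ Xbar Ybar - k r₂ K₂ α₂ (F r₁ K₁ α₁ Xbar Ybar) = 0) :
    Xbar = Xs ∧ Ybar = Ys := by
  obtain ⟨hXs0, hYs0⟩ : 0 < Xs ∧ 0 < Ys := hXs ▸ hYs ▸ coexistence_pos hr₁ hr₂ hK₁ hK₂ hα₁ hα₂ hC
  have hD : α₁ * α₂ * K₁ * K₂ - r₁ * r₂ ≠ 0 := (div_ne_zero_iff.mp (hXs ▸ hXs0.ne')).2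
  have hh : h r₁ K₁ α₁ Xs = Ys := by rw [hXs, hYs, h_coexistence hK₁.ne' hα₁.ne' hD]
  have hk : k r₂ K₂ α₂ Xs = Ys := by rw [hXs, hYs, k_coexistence hr₂.ne' hD]
  have hF : F r₁ K₁ α₁ Xbar Ybar = Xs :=
    eq_of_h_eq_k hK₁.ne' hα₁.ne' hr₂.ne' hD hh hk (by linarith)
  have hG : G r₂ K₂ α₂ Xbar Ybar = Ys := by rw [sub_eq_zero.mp hSh, hF, hh]
  have hE := eq_of_T_eq_coexistence (p := (Xbar, Ybar)) hK₁.ne' hK₂.ne' hα₁ hα₂ hXs0 hYs0 hh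
    ((k_eq_iff_h_eq hr₂.ne' hK₂.ne' hα₂.ne').mp hk) (Prod.ext hF hG)
  exact Prod.ext_iff.mp hE

theorem stmt15 (r₁ r₂ K₁ K₂ α₁ α₂ : ℝ)
    (hr₁ : 0 < r₁) (hr₂ : 0 < r₂) (hK₁ : 0 < K₁) (hK₂ : 0 < K₂)
    (hα₁ : 0 < α₁) (hα₂ : 0 < α₂)
    (hC : (r₁ / α₁ - K₂) * (r₂ / α₂ - K₁) > 0)
    (Xs Ys : ℝ)
    (hXs : Xs = r₂ * K₁ * (α₁ * K₂ - r₁) / (α₁ * α₂ * K₁ * K₂ - r₁ * r₂))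
    (hYs : Ys = r₁ * K₂ * (α₂ * K₁ - r₂) / (α₁ * α₂ * K₁ * K₂ - r₁ * r₂))
    (Xbar Ybar : ℝ)
    (hSh : G r₂ K₂ α₂ Xbar Ybar - h r₁ K₁ α₁ (F r₁ K₁ α₁ Xbar Ybar) = 0)
    (hSk : G r₂ K₂ α₂ Xbar Ybar - k r₂ K₂ α₂ (F r₁ K₁ α₁ Xbar Ybar) = 0)
    (hloc : (0 < Xbar ∧ Xbar ≤ Xs ∧ 0 < Ybar ∧ Ybar ≤ Ys) ∨ (Xs ≤ Xbar ∧ Ys ≤ Ybar)) :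
    Xbar = Xs ∧ Ybar = Ys :=
  stmt15_general r₁ r₂ K₁ K₂ α₁ α₂ hr₁ hr₂ hK₁ hK₂ hα₁ hα₂ hC Xs Ys hXs hYs Xbar Ybar hSh hSk
end

section
/- For the Leslie–Gower competition map with C₁₂ = C₂₁ = 0, the Jacobian matrix of the map evaluated at any equilibrium (X, h(X)) with X ∈ [0, K₁] has eigenvalues λ₁(X) = (1 + r₁(1 − X/K₁) + (X/K₁)r₂)/((1+r₁)(1+r₂)) ∈ (0,1) and λ₂(X) = 1. -/
theorem fderiv_mul_div_one_add_apply {E : Type*} [NormedAddCommGroup E] [NormedSpace ℝ E]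
    (c : ℝ) (u v : E →L[ℝ] ℝ) {q : E} (hq : 1 + v q ≠ 0) (w : E) :
    fderiv ℝ (fun p => c * u p / (1 + v p)) q w
      = c * (u w * (1 + v q) - u q * v w) / (1 + v q) ^ 2 := by
  have hinv : HasFDerivAt (fun p => (1 + v p)⁻¹)
      ((ContinuousLinearMap.toSpanSingleton ℝ (-((1 + v q) ^ 2)⁻¹)).comp v) q :=
    (hasFDerivAt_inv hq).comp q (v.hasFDerivAt.const_add 1)
  have hf := (u.hasFDerivAt.const_mul c).fun_mul hinv
  simp only [div_eq_mul_inv]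
  rw [hf.fderiv]
  simp only [add_apply, smul_apply, ContinuousLinearMap.comp_apply,
    ContinuousLinearMap.toSpanSingleton_apply, smul_eq_mul, mul_neg]
  field_simp
  ring

theorem fderiv_mul_div_one_add_apply_of_eq {E : Type*} [NormedAddCommGroup E]
    [NormedSpace ℝ E] {c : ℝ} (hc : c ≠ 0) (u v : E →L[ℝ] ℝ) {q : E} (hq : 1 + v q = c)
    (w : E) :
    fderiv ℝ (fun p => c * u p / (1 + v p)) q w = u w - u q / c * v w := by
  rw [fderiv_mul_div_one_add_apply c u v (hq ▸ hc) w, hq]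
  field_simp

open Polynomial in
theorem Matrix.charpoly_one_sub_of_det_eq_zero {R : Type*} [CommRing R] [Nontrivial R]
    {M : Matrix (Fin 2) (Fin 2) R} (hM : M.det = 0) :
    (1 - M).charpoly = (X - C (1 - M.trace)) * (X - C 1) := by
  have htr : (1 - M).trace = 2 - M.trace := by
    simp [Matrix.trace_fin_two]
  have hdet : (1 - M).det = 1 - M.trace := by
    rw [Matrix.det_fin_two] at hM
    simp only [det_fin_two, trace_fin_two, sub_apply, one_apply_eq, one_apply_ne, ne_eq,
      zero_ne_one, one_ne_zero, not_false_eq_true, zero_sub, mul_neg, neg_mul, neg_neg]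
    linear_combination hM
  rw [Matrix.charpoly_fin_two, htr, hdet]
  simp only [map_sub, map_one, map_ofNat]
  ring

namespace LeslieGower

variable {r₁ r₂ K₁ K₂ α₁ α₂ : ℝ}

theorem fderiv_F_apply (hr₁ : 1 + r₁ ≠ 0) {q : ℝ × ℝ}
    (hq : 1 + r₁ / K₁ * q.1 + α₁ * q.2 = 1 + r₁) (w : ℝ × ℝ) :
    fderiv ℝ (fun p : ℝ × ℝ => F r₁ K₁ α₁ p.1 p.2) q w
      = w.1 - q.1 / (1 + r₁) * (r₁ / K₁ * w.1 + α₁ * w.2) := by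
  have hF : (fun p : ℝ × ℝ => F r₁ K₁ α₁ p.1 p.2) = fun p => (1 + r₁) *
      ContinuousLinearMap.fst ℝ ℝ ℝ p / (1 + ((r₁ / K₁) • ContinuousLinearMap.fst ℝ ℝ ℝ
        + α₁ • ContinuousLinearMap.snd ℝ ℝ ℝ) p) := by
    ext p; simp [F, add_assoc]
  rw [hF, fderiv_mul_div_one_add_apply_of_eq hr₁ _ _ (by simpa [add_assoc] using hq)]
  simp

theorem fderiv_G_apply (hr₂ : 1 + r₂ ≠ 0) {q : ℝ × ℝ}
    (hq : 1 + r₂ / K₂ * q.2 + α₂ * q.1 = 1 + r₂) (w : ℝ × ℝ) :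
    fderiv ℝ (fun p : ℝ × ℝ => G r₂ K₂ α₂ p.1 p.2) q w
      = w.2 - q.2 / (1 + r₂) * (α₂ * w.1 + r₂ / K₂ * w.2) := by
  have hG : (fun p : ℝ × ℝ => G r₂ K₂ α₂ p.1 p.2) = fun p => (1 + r₂) *
      ContinuousLinearMap.snd ℝ ℝ ℝ p / (1 + ((r₂ / K₂) • ContinuousLinearMap.snd ℝ ℝ ℝ
        + α₂ • ContinuousLinearMap.fst ℝ ℝ ℝ) p) := by
    ext p; simp [G, add_assoc]
  rw [hG, fderiv_mul_div_one_add_apply_of_eq hr₂ _ _ (by simpa [add_assoc] using hq)]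
  simp only [add_apply, smul_apply, ContinuousLinearMap.coe_fst', ContinuousLinearMap.coe_snd',
    smul_eq_mul]
  ring

theorem jacobian_eq_one_sub_diagonal_mul (hr₁ : 1 + r₁ ≠ 0) (hr₂ : 1 + r₂ ≠ 0) {x y : ℝ}
    (hF : 1 + r₁ / K₁ * x + α₁ * y = 1 + r₁) (hG : 1 + r₂ / K₂ * y + α₂ * x = 1 + r₂) :
    !![fderiv ℝ (fun p : ℝ × ℝ => F r₁ K₁ α₁ p.1 p.2) (x, y) (1, 0),
       fderiv ℝ (fun p : ℝ × ℝ => F r₁ K₁ α₁ p.1 p.2) (x, y) (0, 1);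
       fderiv ℝ (fun p : ℝ × ℝ => G r₂ K₂ α₂ p.1 p.2) (x, y) (1, 0),
       fderiv ℝ (fun p : ℝ × ℝ => G r₂ K₂ α₂ p.1 p.2) (x, y) (0, 1)]
      = 1 - Matrix.diagonal ![x / (1 + r₁), y / (1 + r₂)] * !![r₁ / K₁, α₁; α₂, r₂ / K₂] := by
  simp only [fderiv_F_apply (q := (x, y)) hr₁ hF, fderiv_G_apply (q := (x, y)) hr₂ hG]
  ext i j
  fin_cases i <;> fin_cases j <;> simp

theorem det_interaction_eq_zero (hr₁ : r₁ ≠ 0) (hr₂ : r₂ ≠ 0) (hc1 : r₁ / α₁ = K₂)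
    (hc2 : r₂ / α₂ = K₁) : !![r₁ / K₁, α₁; α₂, r₂ / K₂].det = 0 := by
  rw [Matrix.det_fin_two_of, ← hc1, ← hc2]
  field_simp
  ring

theorem F_denominator_at_h (hK₁ : K₁ ≠ 0) (hα₁ : α₁ ≠ 0) (X : ℝ) :
    1 + r₁ / K₁ * X + α₁ * h r₁ K₁ α₁ X = 1 + r₁ := by
  rw [h]
  field_simp
  ring

theorem G_denominator_at_h (hr₁ : r₁ ≠ 0) (hr₂ : r₂ ≠ 0) (hα₁ : α₁ ≠ 0) (hα₂ : α₂ ≠ 0)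
    (hc1 : r₁ / α₁ = K₂) (hc2 : r₂ / α₂ = K₁) (X : ℝ) :
    1 + r₂ / K₂ * h r₁ K₁ α₁ X + α₂ * X = 1 + r₂ := by
  rw [h, ← hc1, ← hc2]
  field_simp
  ring

theorem one_sub_trace_diagonal_mul_at_h (hr₁ : 0 < r₁) (hr₂ : 0 < r₂) (hK₁ : K₁ ≠ 0)
    (hα₁ : α₁ ≠ 0) (hc1 : r₁ / α₁ = K₂) (X : ℝ) :
    1 - (Matrix.diagonal ![X / (1 + r₁), h r₁ K₁ α₁ X / (1 + r₂)]
        * !![r₁ / K₁, α₁; α₂, r₂ / K₂]).trace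
      = (1 + r₁ * (1 - X / K₁) + (X / K₁) * r₂) / ((1 + r₁) * (1 + r₂)) := by
  simp only [h, ← hc1, Matrix.trace_fin_two, Matrix.diagonal_mul, Matrix.of_apply,
    Matrix.cons_val', Matrix.cons_val_zero, Matrix.cons_val_one, Matrix.cons_val_fin_one]
  field_simp
  ring

theorem eigenvalue_mem_Ioo (hr₁ : 0 < r₁) (hr₂ : 0 < r₂) {ξ : ℝ} (hξ : ξ ∈ Set.Icc 0 1) :
    (1 + r₁ * (1 - ξ) + ξ * r₂) / ((1 + r₁) * (1 + r₂)) ∈ Set.Ioo 0 1 := by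
  obtain ⟨hξ0, hξ1⟩ := hξ
  have hden : 0 < (1 + r₁) * (1 + r₂) := by positivity
  constructor
  · exact div_pos (by nlinarith) hden
  · rw [div_lt_one hden]
    nlinarith

end LeslieGower

open LeslieGower in
theorem stmt18_general (r₁ r₂ K₁ K₂ α₁ α₂ : ℝ)
    (hr₁ : 0 < r₁) (hr₂ : 0 < r₂) (hK₁ : 0 < K₁)
    (hα₁ : 0 < α₁) (hα₂ : 0 < α₂)
    (hc1 : r₁ / α₁ = K₂) (hc2 : r₂ / α₂ = K₁)
    (X : ℝ) (hX : X ∈ Set.Icc 0 K₁)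
    (J : Matrix (Fin 2) (Fin 2) ℝ)
    (hJ : J = !![fderiv ℝ (fun p : ℝ × ℝ => F r₁ K₁ α₁ p.1 p.2) (X, h r₁ K₁ α₁ X) (1, 0),
                 fderiv ℝ (fun p : ℝ × ℝ => F r₁ K₁ α₁ p.1 p.2) (X, h r₁ K₁ α₁ X) (0, 1);
                 fderiv ℝ (fun p : ℝ × ℝ => G r₂ K₂ α₂ p.1 p.2) (X, h r₁ K₁ α₁ X) (1, 0),
                 fderiv ℝ (fun p : ℝ × ℝ => G r₂ K₂ α₂ p.1 p.2) (X, h r₁ K₁ α₁ X) (0, 1)])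
    (lam1 : ℝ)
    (hlam1 : lam1 = (1 + r₁ * (1 - X / K₁) + (X / K₁) * r₂) / ((1 + r₁) * (1 + r₂))) :
    J.charpoly = (Polynomial.X - Polynomial.C lam1) * (Polynomial.X - Polynomial.C 1) ∧
      0 < lam1 ∧ lam1 < 1 := by
  set M := Matrix.diagonal ![X / (1 + r₁), h r₁ K₁ α₁ X / (1 + r₂)]
    * !![r₁ / K₁, α₁; α₂, r₂ / K₂]
  have hJM : J = 1 - M := hJ.trans <| jacobian_eq_one_sub_diagonal_mul
    (by positivity) (by positivity) (F_denominator_at_h hK₁.ne' hα₁.ne' X)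
    (G_denominator_at_h hr₁.ne' hr₂.ne' hα₁.ne' hα₂.ne' hc1 hc2 X)
  have hdet : M.det = 0 := by
    rw [Matrix.det_mul, det_interaction_eq_zero hr₁.ne' hr₂.ne' hc1 hc2, mul_zero]
  have hξ : X / K₁ ∈ Set.Icc 0 1 :=
    ⟨div_nonneg hX.1 hK₁.le, (div_le_one hK₁).2 hX.2⟩
  rw [hlam1, hJM, Matrix.charpoly_one_sub_of_det_eq_zero hdet,
    one_sub_trace_diagonal_mul_at_h hr₁ hr₂ hK₁.ne' hα₁.ne' hc1]
  exact ⟨rfl, eigenvalue_mem_Ioo hr₁ hr₂ hξ⟩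

theorem stmt18 (r₁ r₂ K₁ K₂ α₁ α₂ : ℝ)
    (hr₁ : 0 < r₁) (hr₂ : 0 < r₂) (hK₁ : 0 < K₁) (hK₂ : 0 < K₂)
    (hα₁ : 0 < α₁) (hα₂ : 0 < α₂)
    (hc1 : r₁ / α₁ = K₂) (hc2 : r₂ / α₂ = K₁)
    (X : ℝ) (hX : X ∈ Set.Icc 0 K₁)
    (J : Matrix (Fin 2) (Fin 2) ℝ)
    (hJ : J = !![fderiv ℝ (fun p : ℝ × ℝ => F r₁ K₁ α₁ p.1 p.2) (X, h r₁ K₁ α₁ X) (1, 0),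
                 fderiv ℝ (fun p : ℝ × ℝ => F r₁ K₁ α₁ p.1 p.2) (X, h r₁ K₁ α₁ X) (0, 1);
                 fderiv ℝ (fun p : ℝ × ℝ => G r₂ K₂ α₂ p.1 p.2) (X, h r₁ K₁ α₁ X) (1, 0),
                 fderiv ℝ (fun p : ℝ × ℝ => G r₂ K₂ α₂ p.1 p.2) (X, h r₁ K₁ α₁ X) (0, 1)])
    (lam1 : ℝ)
    (hlam1 : lam1 = (1 + r₁ * (1 - X / K₁) + (X / K₁) * r₂) / ((1 + r₁) * (1 + r₂))) :
    J.charpoly = (Polynomial.X - Polynomial.C lam1) * (Polynomial.X - Polynomial.C 1) ∧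
      0 < lam1 ∧ lam1 < 1 :=
  stmt18_general r₁ r₂ K₁ K₂ α₁ α₂ hr₁ hr₂ hK₁ hα₁ hα₂ hc1 hc2 X hX J hJ lam1 hlam1
end
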